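/- arXiv:2405.01860 — 7 statements merged into one kernel-verified Lean document; each statement's English description precedes it below -/
import Mathlib

section
/- For a metric space X, the following five conditions are equivalent: (1) X is injective, i.e. for every metric space A, every subset B ⊆ A, and every 1-Lipschitz map f : B → X there is a 1-Lipschitz map f̄ : A → X extending f; (2) X is a 1-Lipschitz absolute retract, i.e. for every metric space Y and every isometric embedding i : X → Y there exists a 1-Lipschitz map r : Y → X with r(i(x)) = x for all x ∈ X; (3) X is hyperconvex, i.e. for every index set I, every family of points (x_i)_{i∈I} in X and radii (r_i)_{i∈I} in [0,∞) with d_X(x_i,x_j) ≤ r_i + r_j for all i,j ∈ I, the intersection ⋂_{i∈I} B[x_i,r_i] of the closed balls is nonempty; (4) X is metrically convex (for all a,b ∈ X and t ∈ [0,1] there is x ∈ X with d_X(a,x) = t·d_X(a,b) and d_X(x,b) = (1−t)·d_X(a,b)) and X has the binary intersection property (every family of pairwise intersecting closed balls in X has a common point); (5) for every metric space Y and every isometric embedding i : X → Y, every metric space Z, every constant K ≥ 0 and every K-Lipschitz map f : X → Z, there exists a K-Lipschitz map g : Y → Z with g ∘ i = f. -/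
/-- The metric segment `[x,z] = {y : d(x,y) + d(y,z) = d(x,z)}`. -/
def MetricSegment {X : Type*} [MetricSpace X] (x z : X) : Set X :=
  {y | dist x y + dist y z = dist x z}

/-- A metric space is an ℝ-tree if every metric segment `[x,y]` is isometric to the
real interval `[0, d(x,y)]`, and `[x,y] ∩ [y,z] = {y}` implies `d(x,z) = d(x,y) + d(y,z)`. -/
def IsRTree (X : Type*) [MetricSpace X] : Prop :=
  (∀ x y : X, Nonempty ((MetricSegment x y) ≃ᵢ (Set.Icc (0:ℝ) (dist x y)))) ∧
  (∀ x y z : X, MetricSegment x y ∩ MetricSegment y z = {y} →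
    dist x z = dist x y + dist y z)

/-- A metric space `X` is injective if every 1-Lipschitz map into `X` from a subset of a
metric space extends to a 1-Lipschitz map on the whole space. -/
def IsInjectiveMetricSpace (X : Type*) [MetricSpace X] : Prop :=
  ∀ (A : Type) [MetricSpace A] (B : Set A) (f : B → X), LipschitzWith 1 f →
    ∃ g : A → X, LipschitzWith 1 g ∧ ∀ b : B, g b = f b

/-- A metric space is Lipschitz connected if any two points are joined by a Lipschitz
path `f : [0,1] → X`. -/
def LipschitzConnected (X : Type*) [MetricSpace X] : Prop :=
  ∀ x y : X, ∃ f : Set.Icc (0:ℝ) 1 → X, (∃ K : NNReal, LipschitzWith K f) ∧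
    f ⟨0, by norm_num⟩ = x ∧ f ⟨1, by norm_num⟩ = y

/-- The intrinsic metric: the infimum of Lipschitz constants of paths joining `x` and `y`. -/
noncomputable def intrinsicDist {X : Type*} [MetricSpace X] (x y : X) : ℝ :=
  sInf {K : ℝ | 0 ≤ K ∧ ∃ f : Set.Icc (0:ℝ) 1 → X,
    LipschitzWith K.toNNReal f ∧ f ⟨0, by norm_num⟩ = x ∧ f ⟨1, by norm_num⟩ = y}

/-- A metric space is analytic if it is a continuous image of a complete separable
metric space. -/
def IsAnalyticMetricSpace (X : Type*) [MetricSpace X] : Prop :=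
  ∃ (Z : Type) (_ : MetricSpace Z) (_ : CompleteSpace Z)
    (_ : TopologicalSpace.SeparableSpace Z) (g : Z → X),
      Continuous g ∧ Function.Surjective g

/-- `L`-Lipschitz connectedness: any two points `x,y` are joined by an `L`-Lipschitz
path defined on `[0, d(x,y)]`. -/
def LLipschitzConnected (L : NNReal) (Y : Type*) [MetricSpace Y] : Prop :=
  ∀ x y : Y, ∃ f : Set.Icc (0:ℝ) (dist x y) → Y, LipschitzWith L f ∧
    f ⟨0, ⟨le_refl 0, dist_nonneg⟩⟩ = x ∧ f ⟨dist x y, ⟨dist_nonneg, le_refl _⟩⟩ = y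

/-- Hyperconvexity: every family of closed balls with `d(xᵢ,xⱼ) ≤ rᵢ + rⱼ` has a
common point. -/
def Hyperconvex (X : Type*) [MetricSpace X] : Prop :=
  ∀ (I : Type) (x : I → X) (r : I → ℝ), (∀ i, 0 ≤ r i) →
    (∀ i j, dist (x i) (x j) ≤ r i + r j) →
    (⋂ i, Metric.closedBall (x i) (r i)).Nonempty

/-- Metric convexity. -/
def MetricallyConvex (X : Type*) [MetricSpace X] : Prop :=
  ∀ a b : X, ∀ t : ℝ, t ∈ Set.Icc (0:ℝ) 1 →
    ∃ x : X, dist a x = t * dist a b ∧ dist x b = (1 - t) * dist a b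

/-- Binary intersection property: every family of pairwise intersecting closed balls
has a common point. -/
def BinaryIntersectionProperty (X : Type*) [MetricSpace X] : Prop :=
  ∀ (I : Type) (x : I → X) (r : I → ℝ),
    (∀ i j, (Metric.closedBall (x i) (r i) ∩ Metric.closedBall (x j) (r j)).Nonempty) →
    (⋂ i, Metric.closedBall (x i) (r i)).Nonempty

/-!
An injective space is a retract of every space containing it isometrically: the inverse of the
embedding is 1-Lipschitz on its image. For a family of balls `B[xᵢ, rᵢ]` with
`d(xᵢ, xⱼ) ≤ rᵢ + rⱼ`, the function `h y = infᵢ (rᵢ + d(y, xᵢ))` is an admissible distance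
profile for a point adjoined to `X`, and a 1-Lipschitz retraction sends that point into all
the balls. Conversely, in a hyperconvex space a nonexpanding partial map extends by one point
at a time (the candidate values form a compatible family of balls), and Zorn's lemma extends it
everywhere. Finally, hyperconvexity splits into the case of two balls, which is metric
convexity, and the binary intersection property.
-/

open Metric Set

def IsAbsoluteLipschitzRetract (X : Type*) [MetricSpace X] : Prop :=
  ∀ (Y : Type) [MetricSpace Y] (i : X → Y), Isometry i →
    ∃ r : Y → X, LipschitzWith 1 r ∧ ∀ x : X, r (i x) = x

def LipschitzMapsExtendAlongIsometries (X : Type*) [MetricSpace X] : Prop :=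
  ∀ (Y : Type) [MetricSpace Y] (i : X → Y), Isometry i →
    ∀ (Z : Type) [MetricSpace Z] (K : NNReal) (f : X → Z), LipschitzWith K f →
      ∃ g : Y → Z, LipschitzWith K g ∧ g ∘ i = f

section OnePointExtension

variable {X : Type*} [MetricSpace X]

/-- `none` is the adjoined point, at distance `h y` from `y`. -/
def onePointDist (h : X → ℝ) : Option X → Option X → ℝ
  | none, none => 0
  | none, some y => h y
  | some y, none => h y
  | some a, some b => dist a b

abbrev onePointMetricSpace (h : X → ℝ) (hpos : ∀ y, 0 < h y)
    (hlip : ∀ a b, h a ≤ h b + dist a b) (hdist : ∀ a b, dist a b ≤ h a + h b) :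
    MetricSpace (Option X) where
  dist := onePointDist h
  dist_self := by rintro (_ | a) <;> simp [onePointDist]
  dist_comm := by rintro (_ | a) (_ | b) <;> simp [onePointDist, dist_comm]
  dist_triangle := by
    rintro (_ | a) (_ | b) (_ | c) <;> simp only [onePointDist]
    · simp
    · simp
    · linarith [hpos b]
    · linarith [hlip c b, dist_comm b c]
    · simp
    · exact hdist a c
    · linarith [hlip a b]
    · exact dist_triangle a b c
  eq_of_dist_eq_zero := by
    rintro (_ | a) (_ | b) h' <;> simp only [onePointDist] at h'
    · rfl
    · exact absurd h' (hpos b).ne'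
    · exact absurd h' (hpos a).ne'
    · rw [eq_of_dist_eq_zero h']

end OnePointExtension

theorem IsInjectiveMetricSpace.isAbsoluteLipschitzRetract {X : Type*} [MetricSpace X]
    (hX : IsInjectiveMetricSpace X) : IsAbsoluteLipschitzRetract X := by
  intro Y _ i hi
  obtain ⟨r, hr, hri⟩ := hX Y (range i) hi.isometryEquivOnRange.symm
    hi.isometryEquivOnRange.symm.isometry.lipschitz
  exact ⟨r, hr, fun x => (hri ⟨i x, x, rfl⟩).trans (hi.isometryEquivOnRange.symm_apply_apply x)⟩

namespace IsAbsoluteLipschitzRetract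

variable {X : Type} [MetricSpace X]

theorem nonempty (hX : IsAbsoluteLipschitzRetract X) : Nonempty X := by
  by_contra hempty
  rw [not_nonempty_iff] at hempty
  obtain ⟨r, -⟩ := hX Unit (fun _ => ()) fun x => isEmptyElim x
  exact hempty.elim (r ())

theorem exists_forall_dist_le (hX : IsAbsoluteLipschitzRetract X) {h : X → ℝ}
    (hlip : ∀ a b, h a ≤ h b + dist a b) (hdist : ∀ a b, dist a b ≤ h a + h b) :
    ∃ z, ∀ y, dist z y ≤ h y := by
  by_cases hzero : ∃ y, h y ≤ 0
  · obtain ⟨y, hy⟩ := hzero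
    exact ⟨y, fun a => by linarith [hdist y a]⟩
  push Not at hzero
  let := onePointMetricSpace h hzero hlip hdist
  obtain ⟨r, hr, hri⟩ := hX (Option X) some (Isometry.of_dist_eq fun _ _ => rfl)
  refine ⟨r none, fun y => ?_⟩
  calc dist (r none) y = dist (r none) (r (some y)) := by rw [hri]
    _ ≤ dist (none : Option X) (some y) := by simpa using hr.dist_le_mul none (some y)
    _ = h y := rfl

theorem hyperconvex (hX : IsAbsoluteLipschitzRetract X) : Hyperconvex X := by
  intro I x r hr hd
  cases isEmpty_or_nonempty I
  · have := hX.nonempty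
    exact ⟨Classical.arbitrary X, by simp⟩
  set h : X → ℝ := fun y => ⨅ i, (r i + dist y (x i))
  have h_le (y : X) (i : I) : h y ≤ r i + dist y (x i) :=
    ciInf_le ⟨0, by rintro - ⟨j, rfl⟩; linarith [hr j, dist_nonneg (x := y) (y := x j)]⟩ i
  have dist_le (y : X) (j : I) : dist y (x j) ≤ r j + h y := by
    suffices dist y (x j) - r j ≤ h y by linarith
    exact le_ciInf fun i => by linarith [dist_triangle y (x i) (x j), hd i j]
  have hlip (a b : X) : h a ≤ h b + dist a b := by
    suffices h a - dist a b ≤ h b by linarith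
    exact le_ciInf fun i => by linarith [h_le a i, dist_triangle a b (x i)]
  have hdist (a b : X) : dist a b ≤ h a + h b := by
    suffices dist a b - h b ≤ h a by linarith
    refine le_ciInf fun i => ?_
    linarith [dist_triangle a (x i) b, dist_le b i, dist_comm (x i) b]
  obtain ⟨z, hz⟩ := hX.exists_forall_dist_le hlip hdist
  refine ⟨z, mem_iInter.2 fun i => mem_closedBall.2 ?_⟩
  simpa using (hz (x i)).trans (h_le (x i) i)

theorem lipschitzMapsExtendAlongIsometries {X : Type*} [MetricSpace X]
    (hX : IsAbsoluteLipschitzRetract X) : LipschitzMapsExtendAlongIsometries X := by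
  intro Y _ i hi Z _ K f hf
  obtain ⟨r, hr, hri⟩ := hX Y i hi
  exact ⟨f ∘ r, by simpa using hf.comp hr, funext fun x => congrArg f (hri x)⟩

end IsAbsoluteLipschitzRetract

theorem LipschitzMapsExtendAlongIsometries.isAbsoluteLipschitzRetract {X : Type}
    [MetricSpace X] (hX : LipschitzMapsExtendAlongIsometries X) :
    IsAbsoluteLipschitzRetract X := by
  intro Y _ i hi
  obtain ⟨r, hr, hri⟩ := hX Y i hi X 1 id LipschitzWith.id
  exact ⟨r, hr, congrFun hri⟩

section Hyperconvex

variable {A X : Type} [MetricSpace A] [MetricSpace X]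

/-- The graph of a 1-Lipschitz partial map `A → X` (such a relation is automatically
functional). -/
def IsNonexpandingRel (S : Set (A × X)) : Prop :=
  ∀ p ∈ S, ∀ q ∈ S, dist p.2 q.2 ≤ dist p.1 q.1

theorem isNonexpandingRel_sUnion {c : Set (Set (A × X))} (hc : ∀ S ∈ c, IsNonexpandingRel S)
    (hchain : IsChain (· ⊆ ·) c) : IsNonexpandingRel (⋃₀ c) := by
  rintro p ⟨S, hS, hp⟩ q ⟨T, hT, hq⟩
  rcases hchain.total hS hT with hST | hTS
  · exact hc T hT p (hST hp) q hq
  · exact hc S hS p hp q (hTS hq)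

theorem Hyperconvex.exists_isNonexpandingRel_insert (hX : Hyperconvex X)
    {S : Set (A × X)} (hS : IsNonexpandingRel S) (a : A) :
    ∃ z, IsNonexpandingRel (insert (a, z) S) := by
  obtain ⟨z, hz⟩ := hX S (fun p => p.1.2) (fun p => dist a p.1.1) (fun _ => dist_nonneg)
    fun p q => (hS _ p.2 _ q.2).trans (dist_triangle_left _ _ a)
  have hz' : ∀ p ∈ S, dist z p.2 ≤ dist a p.1 := fun p hp =>
    mem_closedBall.1 (mem_iInter.1 hz ⟨p, hp⟩)
  refine ⟨z, ?_⟩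
  rintro p (rfl | hp) q (rfl | hq)
  · simp
  · exact hz' q hq
  · simpa [dist_comm] using hz' p hp
  · exact hS p hp q hq

theorem Hyperconvex.isInjectiveMetricSpace (hX : Hyperconvex X) : IsInjectiveMetricSpace X := by
  intro A _ B f hf
  obtain ⟨m, hfm, hm⟩ := zorn_subset_nonempty {S : Set (A × X) | IsNonexpandingRel S}
    (fun c hc hchain _ => ⟨⋃₀ c, isNonexpandingRel_sUnion hc hchain,
      fun _ => subset_sUnion_of_mem⟩)
    (range fun b : B => ((b : A), f b))
    (by rintro - ⟨b, rfl⟩ - ⟨b', rfl⟩; simpa [Subtype.dist_eq] using hf.dist_le_mul b b')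
  have htotal (a : A) : ∃ z, (a, z) ∈ m := by
    obtain ⟨z, hz⟩ := hX.exists_isNonexpandingRel_insert hm.prop a
    exact ⟨z, hm.2 hz (subset_insert _ _) (mem_insert _ _)⟩
  choose g hg using htotal
  refine ⟨g, LipschitzWith.of_dist_le_mul fun a a' => by simpa using hm.prop _ (hg a) _ (hg a'),
    fun b => dist_le_zero.1 ?_⟩
  simpa using hm.prop _ (hg b) _ (hfm ⟨b, rfl⟩)

end Hyperconvex

section TwoBalls

variable {X : Type*} [MetricSpace X]

theorem dist_le_add_of_closedBall_inter_nonempty {x y : X} {r s : ℝ}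
    (h : (closedBall x r ∩ closedBall y s).Nonempty) : dist x y ≤ r + s :=
  not_lt.1 fun hlt => not_disjoint_iff_nonempty_inter.2 h (closedBall_disjoint_closedBall hlt)

theorem metricallyConvex_iff_closedBall_inter_nonempty :
    MetricallyConvex X ↔ ∀ (x y : X) (r s : ℝ), 0 ≤ r → 0 ≤ s → dist x y ≤ r + s →
      (closedBall x r ∩ closedBall y s).Nonempty := by
  constructor
  · intro hX x y r s hr hs hxy
    rcases (add_nonneg hr hs).eq_or_lt with hrs | hrs
    · obtain rfl : x = y := dist_le_zero.1 (by linarith)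
      exact ⟨x, by simpa using hr, by simpa using hs⟩
    obtain ⟨z, hxz, hzy⟩ := hX x y (r / (r + s))
      ⟨div_nonneg hr hrs.le, (div_le_one hrs).2 (by linarith)⟩
    have hsub : 1 - r / (r + s) = s / (r + s) := by field_simp; ring
    refine ⟨z, ?_, ?_⟩
    · rw [mem_closedBall, dist_comm, hxz, div_mul_eq_mul_div, div_le_iff₀ hrs]
      exact mul_le_mul_of_nonneg_left hxy hr
    · rw [mem_closedBall, hzy, hsub, div_mul_eq_mul_div, div_le_iff₀ hrs]
      exact mul_le_mul_of_nonneg_left hxy hs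
  · intro hX a b t ht
    obtain ⟨z, hza, hzb⟩ := hX a b (t * dist a b) ((1 - t) * dist a b)
      (mul_nonneg ht.1 dist_nonneg) (mul_nonneg (sub_nonneg.2 ht.2) dist_nonneg) (by linarith)
    rw [mem_closedBall, dist_comm] at hza
    rw [mem_closedBall] at hzb
    have := dist_triangle a z b
    exact ⟨z, by linarith, by linarith⟩

theorem Hyperconvex.closedBall_inter_nonempty (hX : Hyperconvex X) {x y : X} {r s : ℝ}
    (hr : 0 ≤ r) (hs : 0 ≤ s) (hxy : dist x y ≤ r + s) :
    (closedBall x r ∩ closedBall y s).Nonempty := by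
  obtain ⟨z, hz⟩ := hX (Fin 2) ![x, y] ![r, s] (by simp [Fin.forall_fin_two, hr, hs])
    (by simp [Fin.forall_fin_two, hr, hs, hxy, dist_comm y x, add_comm s r])
  exact ⟨z, mem_iInter.1 hz 0, mem_iInter.1 hz 1⟩

theorem Hyperconvex.metricallyConvex (hX : Hyperconvex X) : MetricallyConvex X :=
  metricallyConvex_iff_closedBall_inter_nonempty.2 fun _ _ _ _ => hX.closedBall_inter_nonempty

theorem Hyperconvex.binaryIntersectionProperty (hX : Hyperconvex X) :
    BinaryIntersectionProperty X := fun I x r hpair =>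
  hX I x r (fun i => nonempty_closedBall.1 ((hpair i i).mono inter_subset_left))
    fun i j => dist_le_add_of_closedBall_inter_nonempty (hpair i j)

theorem MetricallyConvex.hyperconvex (hconv : MetricallyConvex X)
    (hbip : BinaryIntersectionProperty X) : Hyperconvex X := fun I x r hr hd =>
  hbip I x r fun i j =>
    metricallyConvex_iff_closedBall_inter_nonempty.1 hconv _ _ _ _ (hr i) (hr j) (hd i j)

end TwoBalls

/-- Characterizations of injective metric spaces. -/
theorem injective_metric_space_tfae (X : Type) [MetricSpace X] :
    List.TFAE [
      -- (1) X is injective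
      IsInjectiveMetricSpace X,
      -- (2) X is a 1-Lipschitz absolute retract
      (∀ (Y : Type) [MetricSpace Y] (i : X → Y), Isometry i →
        ∃ r : Y → X, LipschitzWith 1 r ∧ ∀ x : X, r (i x) = x),
      -- (3) X is hyperconvex
      Hyperconvex X,
      -- (4) X is metrically convex and has the binary intersection property
      MetricallyConvex X ∧ BinaryIntersectionProperty X,
      -- (5) Lipschitz maps defined on X extend with the same Lipschitz constant
      (∀ (Y : Type) [MetricSpace Y] (i : X → Y), Isometry i →
        ∀ (Z : Type) [MetricSpace Z] (K : NNReal) (f : X → Z), LipschitzWith K f →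
          ∃ g : Y → Z, LipschitzWith K g ∧ g ∘ i = f)
    ] := by
  tfae_have 1 → 2 := IsInjectiveMetricSpace.isAbsoluteLipschitzRetract
  tfae_have 2 → 3 := IsAbsoluteLipschitzRetract.hyperconvex
  tfae_have 3 → 1 := Hyperconvex.isInjectiveMetricSpace
  tfae_have 3 → 4 := fun h => ⟨h.metricallyConvex, h.binaryIntersectionProperty⟩
  tfae_have 4 → 3 := fun h => h.1.hyperconvex h.2
  tfae_have 2 → 5 := IsAbsoluteLipschitzRetract.lipschitzMapsExtendAlongIsometries
  tfae_have 5 → 2 := LipschitzMapsExtendAlongIsometries.isAbsoluteLipschitzRetract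
  tfae_finish
end

section
/- If a metric space X is metrically convex (for all a,b ∈ X and t ∈ [0,1] there is x ∈ X with d_X(a,x) = t·d_X(a,b) and d_X(x,b) = (1−t)·d_X(a,b)) and has the binary intersection property (every family of pairwise intersecting closed balls in X has a common point), then X is hyperconvex: for every index set I, every family of points (x_i)_{i∈I} in X and radii (r_i)_{i∈I} in [0,∞) with d_X(x_i,x_j) ≤ r_i + r_j for all i,j ∈ I, the intersection ⋂_{i∈I} B[x_i,r_i] of the closed balls is nonempty. -/
theorem MetricallyConvex.closedBall_inter_closedBall_nonempty {X : Type*} [MetricSpace X]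
    (hX : MetricallyConvex X) {x y : X} {r s : ℝ} (hr : 0 ≤ r) (hs : 0 ≤ s)
    (hxy : dist x y ≤ r + s) :
    (Metric.closedBall x r ∩ Metric.closedBall y s).Nonempty := by
  -- the point dividing a segment from `x` to `y` in the ratio `r : s`;
  -- if `r + s = 0` then `r = 0`, so the junk value `t = 0` still satisfies `ht`
  set t := r / (r + s)
  have ht : t * (r + s) = r := by
    rcases (add_nonneg hr hs).eq_or_lt with hrs | hrs
    · simp only [t, ← hrs, mul_zero]; linarith
    · exact div_mul_cancel₀ r hrs.ne'
  have ht_mem : t ∈ Set.Icc (0 : ℝ) 1 :=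
    ⟨div_nonneg hr (add_nonneg hr hs), div_le_one_of_le₀ (by linarith) (add_nonneg hr hs)⟩
  obtain ⟨z, hxz, hzy⟩ := hX x y t ht_mem
  refine ⟨z, Metric.mem_closedBall'.2 ?_, Metric.mem_closedBall.2 ?_⟩
  · calc dist x z = t * dist x y := hxz
      _ ≤ t * (r + s) := mul_le_mul_of_nonneg_left hxy ht_mem.1
      _ = r := ht
  · calc dist z y = (1 - t) * dist x y := hzy
      _ ≤ (1 - t) * (r + s) := mul_le_mul_of_nonneg_left hxy (sub_nonneg.2 ht_mem.2)
      _ = s := by linarith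

/-- Metric convexity together with the binary intersection property implies
hyperconvexity. -/
theorem hyperconvex_of_metricallyConvex_binaryIntersection (X : Type) [MetricSpace X]
    (hconv : MetricallyConvex X) (hbin : BinaryIntersectionProperty X) :
    Hyperconvex X := by
  intro I x r hr hd
  exact hbin I x r fun i j => hconv.closedBall_inter_closedBall_nonempty (hr i) (hr j) (hd i j)
end

section
/- For a metric space X, the following conditions are equivalent: (1) X is ℝ-convex, i.e. for all x,z ∈ X the metric segment [x,z] is isometric to the real interval [0, d_X(x,z)]; (2) for all x,y ∈ X there exists a unique set I ⊆ X such that x,y ∈ I and I is isometric to the real interval [0, d_X(x,y)]; (3) for all x,y ∈ X there exists a unique 1-Lipschitz map f : [0, d_X(x,y)] → X with f(0) = x and f(d_X(x,y)) = y. -/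
/-!
A 1-Lipschitz map `[0, d(x,y)] → X` from `x` to `y` is an isometry, and an isometric copy of
`[0, d(x,y)]` containing `x` and `y` is the image of such an isometry starting at `x`, lying
inside `[x,y]`. Two isometries of `[0, d]` with the same starting point and nested images
coincide, which gives (1) ⇒ (2) ⇒ (3). For (3) ⇒ (1): a point `w ∈ [x,z]` lies on the
concatenation of the paths from `x` to `w` and from `w` to `z`, which by uniqueness is the path
from `x` to `z`, so `[x,z]` is the image of that path.
-/

open Set

lemma Real.dist_eq_sub_of_le {s t : ℝ} (h : s ≤ t) : dist s t = t - s := by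
  rw [dist_comm, Real.dist_eq, abs_of_nonneg (sub_nonneg.2 h)]

namespace Set.Icc

def reflect (a b : ℝ) : Icc a b ≃ᵢ Icc a b where
  toFun t := ⟨a + b - t, by linarith [t.2.2], by linarith [t.2.1]⟩
  invFun t := ⟨a + b - t, by linarith [t.2.2], by linarith [t.2.1]⟩
  left_inv t := by ext; simp
  right_inv t := by ext; simp
  isometry_toFun := Isometry.of_dist_eq fun s t => by
    simp only [Subtype.dist_eq, Real.dist_eq, sub_sub_sub_cancel_left, abs_sub_comm]

/-- Two points of `[a, b]` at distance `b - a` are its endpoints, in one order or the other. -/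
lemma exists_isometryEquiv_endpoints {a b : ℝ} (hab : a ≤ b) {p q : Icc a b}
    (h : dist p q = b - a) :
    ∃ σ : Icc a b ≃ᵢ Icc a b, σ ⟨a, left_mem_Icc.2 hab⟩ = p ∧ σ ⟨b, right_mem_Icc.2 hab⟩ = q := by
  rw [Subtype.dist_eq, Real.dist_eq] at h
  obtain ⟨hap, hpb⟩ := p.2
  obtain ⟨haq, hqb⟩ := q.2
  rcases abs_cases ((p : ℝ) - q) with ⟨hpq, -⟩ | ⟨hpq, -⟩
  · refine ⟨reflect a b, Subtype.ext ?_, Subtype.ext ?_⟩ <;>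
      simp only [reflect, IsometryEquiv.coe_mk, Equiv.coe_fn_mk] <;> linarith
  · exact ⟨IsometryEquiv.refl _, Subtype.ext (show a = p by linarith),
      Subtype.ext (show b = q by linarith)⟩

end Set.Icc

section

variable {X : Type*} [MetricSpace X]

/-- By the triangle inequality through `f s` and `f t`, shortening `[s, t]` would shorten
`[a, b]`. -/
lemma LipschitzWith.isometry_of_dist_endpoints {a b : ℝ} (hab : a ≤ b) {f : Icc a b → X}
    (hf : LipschitzWith 1 f)
    (h : dist (f ⟨a, left_mem_Icc.2 hab⟩) (f ⟨b, right_mem_Icc.2 hab⟩) = b - a) :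
    Isometry f := by
  refine Isometry.of_dist_eq fun s t => le_antisymm (by simpa using hf.dist_le_mul s t) ?_
  wlog hst : (s : ℝ) ≤ t generalizing s t
  · rw [dist_comm s, dist_comm (f s)]
    exact this t s (le_of_not_ge hst)
  have has := hf.dist_le_mul ⟨a, left_mem_Icc.2 hab⟩ s
  have htb := hf.dist_le_mul t ⟨b, right_mem_Icc.2 hab⟩
  simp only [NNReal.coe_one, one_mul, Subtype.dist_eq] at has htb ⊢
  rw [Real.dist_eq_sub_of_le s.2.1] at has
  rw [Real.dist_eq_sub_of_le t.2.2] at htb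
  rw [Real.dist_eq_sub_of_le hst]
  linarith [dist_triangle4 (f ⟨a, left_mem_Icc.2 hab⟩) (f s) (f t) (f ⟨b, right_mem_Icc.2 hab⟩)]

lemma Isometry.eq_of_range_subset {a b : ℝ} (hab : a ≤ b) {f g : Icc a b → X}
    (hf : Isometry f) (hg : Isometry g)
    (h : f ⟨a, left_mem_Icc.2 hab⟩ = g ⟨a, left_mem_Icc.2 hab⟩) (hfg : range f ⊆ range g) :
    f = g := by
  funext t
  obtain ⟨s, hs⟩ := hfg ⟨t, rfl⟩
  have hst : dist (⟨a, left_mem_Icc.2 hab⟩ : Icc a b) s = dist ⟨a, left_mem_Icc.2 hab⟩ t := by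
    rw [← hg.dist_eq, ← hf.dist_eq, hs, h]
  rw [Subtype.dist_eq, Subtype.dist_eq, Real.dist_eq_sub_of_le s.2.1,
    Real.dist_eq_sub_of_le t.2.1] at hst
  rw [← hs, Subtype.ext (by linarith : (s : ℝ) = t)]

lemma LipschitzWith.ite_le {K : NNReal} {F G : ℝ → X} (hF : LipschitzWith K F)
    (hG : LipschitzWith K G) {a : ℝ} (h : F a = G a) :
    LipschitzWith K fun t => if t ≤ a then F t else G t := by
  refine LipschitzWith.of_dist_le_mul fun s t => ?_
  wlog hst : s ≤ t generalizing s t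
  · rw [dist_comm s, dist_comm (if s ≤ a then F s else G s)]
    exact this t s (le_of_not_ge hst)
  rcases le_or_gt t a with hta | hat
  · simp only [if_pos (hst.trans hta), if_pos hta]
    exact hF.dist_le_mul s t
  rcases le_or_gt s a with hsa | has
  · simp only [if_pos hsa, if_neg hat.not_ge]
    calc dist (F s) (G t) ≤ dist (F s) (F a) + dist (G a) (G t) := h ▸ dist_triangle _ _ _
      _ ≤ K * dist s a + K * dist a t := add_le_add (hF.dist_le_mul _ _) (hG.dist_le_mul _ _)
      _ = K * dist s t := by
        rw [Real.dist_eq_sub_of_le hsa, Real.dist_eq_sub_of_le hat.le,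
          Real.dist_eq_sub_of_le hst]
        ring
  · simp only [if_neg has.not_ge, if_neg hat.not_ge]
    exact hG.dist_le_mul s t

lemma left_mem_metricSegment (x y : X) : x ∈ MetricSegment x y := by
  simp [MetricSegment]

lemma right_mem_metricSegment (x y : X) : y ∈ MetricSegment x y := by
  simp [MetricSegment]

lemma range_subset_metricSegment {x y : X} {γ : Icc (0 : ℝ) (dist x y) → X} (hγ : Isometry γ)
    (h₀ : γ ⟨0, left_mem_Icc.2 dist_nonneg⟩ = x)
    (h₁ : γ ⟨dist x y, right_mem_Icc.2 dist_nonneg⟩ = y) :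
    range γ ⊆ MetricSegment x y := by
  rintro _ ⟨t, rfl⟩
  have hx := hγ.dist_eq ⟨0, left_mem_Icc.2 dist_nonneg⟩ t
  have hy := hγ.dist_eq t ⟨dist x y, right_mem_Icc.2 dist_nonneg⟩
  rw [h₀, Subtype.dist_eq, Real.dist_eq_sub_of_le t.2.1] at hx
  rw [h₁, Subtype.dist_eq, Real.dist_eq_sub_of_le t.2.2] at hy
  change dist x (γ t) + dist (γ t) y = dist x y
  rw [hx, hy]
  ring

lemma exists_isometry_range_eq {x y : X} {I : Set X} (hx : x ∈ I) (hy : y ∈ I)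
    (e : I ≃ᵢ Icc (0 : ℝ) (dist x y)) :
    ∃ γ : Icc (0 : ℝ) (dist x y) → X, Isometry γ ∧ γ ⟨0, left_mem_Icc.2 dist_nonneg⟩ = x ∧
      γ ⟨dist x y, right_mem_Icc.2 dist_nonneg⟩ = y ∧ range γ = I := by
  have hd : dist (e ⟨x, hx⟩) (e ⟨y, hy⟩) = dist x y - 0 := by
    rw [e.dist_eq, sub_zero]
    rfl
  obtain ⟨σ, hσ₀, hσ₁⟩ := Icc.exists_isometryEquiv_endpoints dist_nonneg hd
  refine ⟨(↑) ∘ e.symm ∘ σ, isometry_subtype_coe.comp (e.symm.isometry.comp σ.isometry),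
    ?_, ?_, ?_⟩
  · simp [hσ₀]
  · simp [hσ₁]
  · rw [(e.symm.surjective.comp σ.surjective).range_comp, Subtype.range_coe]

lemma exists_lipschitzWith_one_path_through {x w z : X} (hw : w ∈ MetricSegment x z)
    {f₁ : Icc (0 : ℝ) (dist x w) → X} (hf₁ : LipschitzWith 1 f₁)
    (h₁₀ : f₁ ⟨0, left_mem_Icc.2 dist_nonneg⟩ = x)
    (h₁₁ : f₁ ⟨dist x w, right_mem_Icc.2 dist_nonneg⟩ = w)
    {f₂ : Icc (0 : ℝ) (dist w z) → X} (hf₂ : LipschitzWith 1 f₂)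
    (h₂₀ : f₂ ⟨0, left_mem_Icc.2 dist_nonneg⟩ = w)
    (h₂₁ : f₂ ⟨dist w z, right_mem_Icc.2 dist_nonneg⟩ = z) :
    ∃ g : Icc (0 : ℝ) (dist x z) → X, LipschitzWith 1 g ∧
      g ⟨0, left_mem_Icc.2 dist_nonneg⟩ = x ∧ g ⟨dist x z, right_mem_Icc.2 dist_nonneg⟩ = z ∧
      w ∈ range g := by
  have hxz : dist x z = dist x w + dist w z := hw.symm
  have hwz : dist x w ≤ dist x z := hxz ▸ le_add_of_nonneg_right dist_nonneg
  let F₁ : ℝ → X := f₁ ∘ projIcc 0 (dist x w) dist_nonneg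
  let F₂ : ℝ → X := f₂ ∘ projIcc 0 (dist w z) dist_nonneg ∘ IsometryEquiv.subRight (dist x w)
  have hF₁ : LipschitzWith 1 F₁ := by simpa using hf₁.comp (LipschitzWith.projIcc _)
  have hF₂ : LipschitzWith 1 F₂ := by
    simpa using hf₂.comp ((LipschitzWith.projIcc _).comp
      (IsometryEquiv.subRight (dist x w)).isometry.lipschitz)
  have hF₁w : F₁ (dist x w) = w := by simp [F₁, projIcc_right, h₁₁]
  have hF₂w : F₂ (dist x w) = w := by simp [F₂, projIcc_left, h₂₀]
  let F : ℝ → X := fun t => if t ≤ dist x w then F₁ t else F₂ t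
  have hF : LipschitzWith 1 (F ∘ (↑) : Icc (0 : ℝ) (dist x z) → X) := by
    simpa using (hF₁.ite_le hF₂ (hF₁w.trans hF₂w.symm)).comp (LipschitzWith.subtype_val _)
  have hF_of_ge : ∀ t, dist x w ≤ t → F t = F₂ t := by
    intro t ht
    rcases ht.eq_or_lt with rfl | ht
    · simp [F, hF₁w, hF₂w]
    · simp [F, ht.not_ge]
  refine ⟨F ∘ (↑), hF, ?_, ?_, ⟨⟨dist x w, dist_nonneg, hwz⟩, ?_⟩⟩
  · simp [F, F₁, projIcc_left, h₁₀]
  · change F (dist x z) = z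
    rw [hF_of_ge _ hwz]
    simp [F₂, hxz, projIcc_right, h₂₁]
  · simp [F, hF₁w]

lemma eq_metricSegment_of_isometryEquiv {x y : X} (φ : MetricSegment x y ≃ᵢ Icc (0 : ℝ) (dist x y))
    {I : Set X} (hx : x ∈ I) (hy : y ∈ I) (e : I ≃ᵢ Icc (0 : ℝ) (dist x y)) :
    I = MetricSegment x y := by
  obtain ⟨γ, hγ, hγ₀, hγ₁, rfl⟩ := exists_isometry_range_eq hx hy e
  obtain ⟨δ, hδ, hδ₀, -, hδr⟩ :=
    exists_isometry_range_eq (left_mem_metricSegment x y) (right_mem_metricSegment x y) φ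
  have hγδ : range γ ⊆ range δ := hδr ▸ range_subset_metricSegment hγ hγ₀ hγ₁
  rw [← hδr, hγ.eq_of_range_subset dist_nonneg hδ (hγ₀.trans hδ₀.symm) hγδ]

lemma metricSegment_subset_range_of_unique {x z : X} {f : Icc (0 : ℝ) (dist x z) → X}
    (hpath : ∀ x y : X, ∃ g : Icc (0 : ℝ) (dist x y) → X, LipschitzWith 1 g ∧
      g ⟨0, left_mem_Icc.2 dist_nonneg⟩ = x ∧ g ⟨dist x y, right_mem_Icc.2 dist_nonneg⟩ = y)
    (hf : ∀ g : Icc (0 : ℝ) (dist x z) → X, LipschitzWith 1 g ∧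
      g ⟨0, left_mem_Icc.2 dist_nonneg⟩ = x ∧ g ⟨dist x z, right_mem_Icc.2 dist_nonneg⟩ = z →
      g = f) :
    MetricSegment x z ⊆ range f := by
  intro w hw
  obtain ⟨f₁, hf₁, h₁₀, h₁₁⟩ := hpath x w
  obtain ⟨f₂, hf₂, h₂₀, h₂₁⟩ := hpath w z
  obtain ⟨g, hg, hg₀, hg₁, hwg⟩ :=
    exists_lipschitzWith_one_path_through hw hf₁ h₁₀ h₁₁ hf₂ h₂₀ h₂₁
  exact hf g ⟨hg, hg₀, hg₁⟩ ▸ hwg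

end

/-- Characterizations of ℝ-convex metric spaces. -/
theorem rconvex_tfae (X : Type) [MetricSpace X] :
    List.TFAE [
      -- (1) X is ℝ-convex
      (∀ x z : X, Nonempty ((MetricSegment x z) ≃ᵢ (Set.Icc (0:ℝ) (dist x z)))),
      -- (2) unique isometric copy of [0, d(x,y)] through any two points
      (∀ x y : X, ∃! I : Set X, x ∈ I ∧ y ∈ I ∧
        Nonempty (I ≃ᵢ (Set.Icc (0:ℝ) (dist x y)))),
      -- (3) unique 1-Lipschitz map [0, d(x,y)] → X joining any two points
      (∀ x y : X, ∃! f : Set.Icc (0:ℝ) (dist x y) → X, LipschitzWith 1 f ∧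
        f ⟨0, ⟨le_refl 0, dist_nonneg⟩⟩ = x ∧ f ⟨dist x y, ⟨dist_nonneg, le_refl _⟩⟩ = y)
    ] := by
  tfae_have 1 → 2 := fun h1 x y =>
    ⟨MetricSegment x y, ⟨left_mem_metricSegment x y, right_mem_metricSegment x y, h1 x y⟩,
      fun _ ⟨hxI, hyI, ⟨e⟩⟩ => eq_metricSegment_of_isometryEquiv (h1 x y).some hxI hyI e⟩
  tfae_have 2 → 3 := by
    intro h2 x y
    obtain ⟨I, ⟨hxI, hyI, ⟨e⟩⟩, hI⟩ := h2 x y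
    obtain ⟨γ, hγ, hγ₀, hγ₁, rfl⟩ := exists_isometry_range_eq hxI hyI e
    refine ⟨γ, ⟨hγ.lipschitz, hγ₀, hγ₁⟩, fun f ⟨hf, hf₀, hf₁⟩ => ?_⟩
    have hfi : Isometry f := hf.isometry_of_dist_endpoints dist_nonneg (by rw [hf₀, hf₁, sub_zero])
    have hfγ : range f = range γ := hI _ ⟨⟨_, hf₀⟩, ⟨_, hf₁⟩, ⟨hfi.isometryEquivOnRange.symm⟩⟩
    exact hfi.eq_of_range_subset dist_nonneg hγ (hf₀.trans hγ₀.symm) hfγ.subset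
  tfae_have 3 → 1 := by
    intro h3 x z
    obtain ⟨f, ⟨hf, hf₀, hf₁⟩, hfu⟩ := h3 x z
    have hfi : Isometry f := hf.isometry_of_dist_endpoints dist_nonneg (by rw [hf₀, hf₁, sub_zero])
    have hseg : MetricSegment x z = range f :=
      (metricSegment_subset_range_of_unique (fun x y => (h3 x y).exists) hfu).antisymm
        (range_subset_metricSegment hfi hf₀ hf₁)
    rw [hseg]
    exact ⟨hfi.isometryEquivOnRange.symm⟩
  tfae_finish
end

section
/- Let X be a Lipschitz connected metric space with intrinsic metric d_IX. If a sequence (x_n) in X is Cauchy with respect to d_IX (for every ε > 0 there is N such that d_IX(x_n, x_m) < ε for all n,m ≥ N) and converges to a point x ∈ X with respect to the metric d_X, then d_IX(x_n, x) → 0, i.e. (x_n) converges to x with respect to d_IX as well. -/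
/-!
Choose `v 0 = u n, v 1, v 2, …` along the sequence with `d_I(v k, v (k + 1)) < δ k`, where
`∑ δ k = ε / 2`, and join `v k` to `v (k + 1)` by a 1-Lipschitz path on `[a k, a (k + 1)]`,
`a k = δ 0 + ⋯ + δ (k - 1)`. Putting `p` at `ε / 2 = lim a k`, the concatenation stays
1-Lipschitz on the closed interval because `v k → p` in `d_X` (no completeness is needed:
the limit point is given). Rescaled to `[0, 1]` it is an `ε / 2`-Lipschitz path from `u n` to `p`.
-/

open Set Filter Topology NNReal

section RealLipschitz

variable {X : Type*} [PseudoMetricSpace X] {f : ℝ → X} {K : ℝ≥0} {s : Set ℝ}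

theorem LipschitzOnWith.dist_le_mul_sub (hf : LipschitzOnWith K f s) {x y : ℝ} (hx : x ∈ s)
    (hy : y ∈ s) (hxy : x ≤ y) : dist (f x) (f y) ≤ K * (y - x) := by
  simpa [Real.dist_eq, abs_sub_comm x y, abs_of_nonneg (sub_nonneg.2 hxy)] using
    hf.dist_le_mul x hx y hy

theorem LipschitzOnWith.of_dist_le_mul_sub
    (h : ∀ x ∈ s, ∀ y ∈ s, x ≤ y → dist (f x) (f y) ≤ K * (y - x)) :
    LipschitzOnWith K f s := by
  refine LipschitzOnWith.of_dist_le_mul fun x hx y hy => ?_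
  rcases le_total x y with hxy | hyx
  · simpa [Real.dist_eq, abs_sub_comm x y, abs_of_nonneg (sub_nonneg.2 hxy)] using h x hx y hy hxy
  · simpa [dist_comm, Real.dist_eq, abs_of_nonneg (sub_nonneg.2 hyx)] using h y hy x hx hyx

theorem LipschitzOnWith.Icc_union_Icc {a b c : ℝ} (hab : LipschitzOnWith K f (Icc a b))
    (hbc : LipschitzOnWith K f (Icc b c)) : LipschitzOnWith K f (Icc a c) := by
  refine .of_dist_le_mul_sub fun x hx y hy hxy => ?_
  by_cases hyb : y ≤ b
  · exact hab.dist_le_mul_sub ⟨hx.1, hxy.trans hyb⟩ ⟨hx.1.trans hxy, hyb⟩ hxy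
  by_cases hbx : b ≤ x
  · exact hbc.dist_le_mul_sub ⟨hbx, hxy.trans hy.2⟩ ⟨hbx.trans hxy, hy.2⟩ hxy
  rw [not_le] at hyb hbx
  calc dist (f x) (f y) ≤ dist (f x) (f b) + dist (f b) (f y) := dist_triangle _ _ _
    _ ≤ K * (b - x) + K * (y - b) := add_le_add
        (hab.dist_le_mul_sub ⟨hx.1, hbx.le⟩ ⟨hx.1.trans hbx.le, le_rfl⟩ hbx.le)
        (hbc.dist_le_mul_sub ⟨le_rfl, hyb.le.trans hy.2⟩ ⟨hyb.le, hy.2⟩ hyb.le)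
    _ = K * (y - x) := by ring

end RealLipschitz

section Concat

variable {X : Type*} {a : ℕ → ℝ} {γ : ℕ → ℝ → X} {p : X}

open Classical in
/-- Runs through `γ k` on `[a k, a (k + 1))` and is `p` beyond all the `a k`. -/
noncomputable def concatSeq (a : ℕ → ℝ) (γ : ℕ → ℝ → X) (p : X) (t : ℝ) : X :=
  if h : ∃ k, t < a (k + 1) then γ (Nat.find h) t else p

theorem concatSeq_of_forall_le {t : ℝ} (ht : ∀ k, a k ≤ t) : concatSeq a γ p t = p := by
  simp [concatSeq, ht]

theorem concatSeq_eqOn (ha : StrictMono a) (hmatch : ∀ k, γ k (a (k + 1)) = γ (k + 1) (a (k + 1)))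
    (k : ℕ) : EqOn (concatSeq a γ p) (γ k) (Icc (a k) (a (k + 1))) := by
  have key : ∀ j, ∀ t ∈ Ico (a j) (a (j + 1)), concatSeq a γ p t = γ j t := by
    intro j t ht
    have h : ∃ k, t < a (k + 1) := ⟨j, ht.2⟩
    have hfind : Nat.find h = j := (Nat.find_eq_iff h).2
      ⟨ht.2, fun i hi hlt => not_lt_of_ge ((ha.monotone (Nat.succ_le_of_lt hi)).trans ht.1) hlt⟩
    simp only [concatSeq, dif_pos h, hfind]
  intro t ht
  rcases ht.2.lt_or_eq with hlt | rfl
  · exact key k t ⟨ht.1, hlt⟩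
  · rw [key (k + 1) _ ⟨le_rfl, ha (Nat.lt_succ_self _)⟩, hmatch]

variable [PseudoMetricSpace X] {K : ℝ≥0}

theorem lipschitzOnWith_concatSeq (ha : StrictMono a) {b : ℝ} (hab : Tendsto a atTop (𝓝 b))
    (hγ : ∀ k, LipschitzOnWith K (γ k) (Icc (a k) (a (k + 1))))
    (hmatch : ∀ k, γ k (a (k + 1)) = γ (k + 1) (a (k + 1)))
    (hp : Tendsto (fun k => γ k (a k)) atTop (𝓝 p)) :
    LipschitzOnWith K (concatSeq a γ p) (Icc (a 0) b) := by
  have hpiece (k : ℕ) : LipschitzOnWith K (concatSeq a γ p) (Icc (a k) (a (k + 1))) :=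
    fun x hx y hy => by
      rw [concatSeq_eqOn ha hmatch k hx, concatSeq_eqOn ha hmatch k hy]
      exact hγ k hx hy
  have hinit (n : ℕ) : LipschitzOnWith K (concatSeq a γ p) (Icc (a 0) (a n)) := by
    induction n with
    | zero => exact (hpiece 0).mono (Icc_subset_Icc_right (ha.monotone (Nat.zero_le 1)))
    | succ n ih => exact ih.Icc_union_Icc (hpiece n)
  have hga : Tendsto (fun k => concatSeq a γ p (a k)) atTop (𝓝 p) :=
    hp.congr fun k => (concatSeq_eqOn ha hmatch k ⟨le_rfl, (ha k.lt_succ_self).le⟩).symm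
  have hgb : concatSeq a γ p b = p :=
    concatSeq_of_forall_le fun k => ha.monotone.ge_of_tendsto hab k
  refine .of_dist_le_mul_sub fun x hx y hy hxy => ?_
  rcases hxy.eq_or_lt with rfl | hxy
  · simp
  rcases hy.2.lt_or_eq with hyb | rfl
  · obtain ⟨n, hn⟩ := (hab.eventually_const_lt hyb).exists
    exact (hinit n).dist_le_mul_sub ⟨hx.1, hxy.le.trans hn.le⟩ ⟨hx.1.trans hxy.le, hn.le⟩ hxy.le
  · rw [hgb]
    refine le_of_tendsto_of_tendsto (tendsto_const_nhds.dist hga)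
      ((hab.sub_const x).const_mul (K : ℝ)) ?_
    filter_upwards [hab.eventually_const_lt hxy] with n hn
    exact (hinit n).dist_le_mul_sub ⟨hx.1, hn.le⟩ ⟨hx.1.trans hn.le, le_rfl⟩ hn.le

end Concat

section Intrinsic

variable {X : Type*} [MetricSpace X]

theorem intrinsicDist_nonneg (x y : X) : 0 ≤ intrinsicDist x y :=
  Real.sInf_nonneg fun _ hK => hK.1

theorem intrinsicDist_le_of_lipschitzOnWith {g : ℝ → X} {K : ℝ≥0} {s t : ℝ} (hst : s ≤ t)
    (hg : LipschitzOnWith K g (Icc s t)) : intrinsicDist (g s) (g t) ≤ K * (t - s) := by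
  have hlen : 0 ≤ (K : ℝ) * (t - s) := by have := sub_nonneg.2 hst; positivity
  have hmem (τ : Icc (0 : ℝ) 1) : s + τ * (t - s) ∈ Icc s t := by
    constructor <;> nlinarith [τ.2.1, τ.2.2]
  have hpath : LipschitzWith (K * (t - s) : ℝ).toNNReal
      (fun τ : Icc (0 : ℝ) 1 => g (s + τ * (t - s))) := by
    refine LipschitzWith.of_dist_le_mul fun τ σ => ?_
    calc dist (g (s + τ * (t - s))) (g (s + σ * (t - s)))
        ≤ K * dist (s + τ * (t - s)) (s + σ * (t - s)) := hg.dist_le_mul _ (hmem τ) _ (hmem σ)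
      _ = K * (t - s) * dist τ σ := by
        rw [Subtype.dist_eq, Real.dist_eq, Real.dist_eq, add_sub_add_left_eq_sub, ← sub_mul,
          abs_mul, abs_of_nonneg (sub_nonneg.2 hst)]
        ring
      _ = _ := by rw [Real.coe_toNNReal _ hlen]
  exact csInf_le ⟨0, fun _ hK => hK.1⟩ ⟨hlen, _, hpath, by simp, by simp⟩

theorem exists_lipschitzWith_one_of_intrinsicDist_lt (h : LipschitzConnected X) {x y : X}
    {L : ℝ} (hL : intrinsicDist x y < L) (t₀ : ℝ) :
    ∃ γ : ℝ → X, LipschitzWith 1 γ ∧ γ t₀ = x ∧ γ (t₀ + L) = y := by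
  have hne : Set.Nonempty {K : ℝ | 0 ≤ K ∧ ∃ f : Icc (0 : ℝ) 1 → X,
      LipschitzWith K.toNNReal f ∧ f ⟨0, by norm_num⟩ = x ∧ f ⟨1, by norm_num⟩ = y} := by
    obtain ⟨f, ⟨K, hK⟩, hf0, hf1⟩ := h x y
    exact ⟨K, K.2, f, by rwa [Real.toNNReal_coe], hf0, hf1⟩
  obtain ⟨K, ⟨hK0, f, hf, hf0, hf1⟩, hKL⟩ := exists_lt_of_csInf_lt hne hL
  have hL0 : 0 < L := hK0.trans_lt hKL
  have hfL : LipschitzWith L.toNNReal f := hf.weaken (Real.toNNReal_le_toNNReal hKL.le)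
  refine ⟨fun t => IccExtend zero_le_one f ((t - t₀) / L), ?_, ?_, ?_⟩
  · refine LipschitzWith.of_dist_le_mul fun s t => ?_
    calc dist (IccExtend zero_le_one f ((s - t₀) / L)) (IccExtend zero_le_one f ((t - t₀) / L))
        ≤ L * dist ((s - t₀) / L) ((t - t₀) / L) := by
          have := (hfL.comp (LipschitzWith.projIcc zero_le_one)).dist_le_mul
            ((s - t₀) / L) ((t - t₀) / L)
          rwa [mul_one, Real.coe_toNNReal _ hL0.le] at this
      _ = 1 * dist s t := by
        rw [Real.dist_eq, Real.dist_eq, ← _root_.sub_div, sub_sub_sub_cancel_right, abs_div,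
          abs_of_pos hL0, one_mul, mul_div_cancel₀ _ hL0.ne']
  · simpa using hf0
  · simpa [hL0.ne'] using hf1

theorem intrinsicDist_le_of_hasSum (h : LipschitzConnected X) {v : ℕ → X} {p : X} {δ : ℕ → ℝ}
    {c : ℝ} (hδ : HasSum δ c) (hv : ∀ k, intrinsicDist (v k) (v (k + 1)) < δ k)
    (hp : Tendsto v atTop (𝓝 p)) : intrinsicDist (v 0) p ≤ c := by
  set a : ℕ → ℝ := fun k => ∑ i ∈ Finset.range k, δ i
  have ha_succ (k : ℕ) : a (k + 1) = a k + δ k := Finset.sum_range_succ δ k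
  have ha : StrictMono a := strictMono_nat_of_lt_succ fun k => by
    rw [ha_succ]; linarith [intrinsicDist_nonneg (v k) (v (k + 1)), hv k]
  have ha_le : ∀ k, a k ≤ c := ha.monotone.ge_of_tendsto hδ.tendsto_sum_nat
  choose γ hγ hγ₀ hγ₁ using fun k =>
    exists_lipschitzWith_one_of_intrinsicDist_lt h (hv k) (a k)
  have hmatch (k : ℕ) : γ k (a (k + 1)) = γ (k + 1) (a (k + 1)) := by
    rw [ha_succ, hγ₁, ← ha_succ, hγ₀]
  have hglue := lipschitzOnWith_concatSeq ha hδ.tendsto_sum_nat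
    (fun k => (hγ k).lipschitzOnWith) hmatch (hp.congr fun k => (hγ₀ k).symm)
  have hstart : concatSeq a γ p (a 0) = v 0 := by
    rw [concatSeq_eqOn ha hmatch 0 ⟨le_rfl, (ha Nat.zero_lt_one).le⟩, hγ₀]
  have hend : concatSeq a γ p c = p := concatSeq_of_forall_le ha_le
  have := intrinsicDist_le_of_lipschitzOnWith (ha_le 0) hglue
  rwa [hstart, hend, NNReal.coe_one, one_mul, show a 0 = 0 from Finset.sum_range_zero δ,
    sub_zero] at this

end Intrinsic

theorem exists_forall_ge_chain_lt {α : Type*} {d : α → α → ℝ} {u : ℕ → α}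
    (hu : ∀ ε : ℝ, 0 < ε → ∃ N : ℕ, ∀ n ≥ N, ∀ m ≥ N, d (u n) (u m) < ε) {δ : ℕ → ℝ}
    (hδ : ∀ k, 0 < δ k) : ∃ N, ∀ n ≥ N, ∃ φ : ℕ → ℕ, φ 0 = n ∧ Tendsto φ atTop atTop ∧
      ∀ k, d (u (φ k)) (u (φ (k + 1))) < δ k := by
  choose N hN using fun k => hu (δ k) (hδ k)
  refine ⟨N 0, fun n hn => ⟨fun | 0 => n | k + 1 => max (k + 1) (max (N k) (N (k + 1))), rfl,
    ?_, ?_⟩⟩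
  · refine (tendsto_add_atTop_iff_nat 1).1 (tendsto_atTop_mono (fun k => le_max_left _ _) ?_)
    exact tendsto_add_atTop_nat 1
  · rintro (_ | k)
    · exact hN 0 n hn _ (le_max_of_le_right (le_max_left _ _))
    · exact hN (k + 1) _ (le_max_of_le_right (le_max_right _ _)) _
        (le_max_of_le_right (le_max_left _ _))

/-- In a Lipschitz connected metric space, a sequence Cauchy with respect to the
intrinsic metric which converges in the metric `d_X` to a point `p` also converges
to `p` with respect to the intrinsic metric. -/
theorem intrinsic_cauchy_convergent (X : Type) [MetricSpace X]
    (h : LipschitzConnected X) (u : ℕ → X) (p : X)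
    (hcauchy : ∀ ε : ℝ, 0 < ε → ∃ N : ℕ, ∀ n ≥ N, ∀ m ≥ N, intrinsicDist (u n) (u m) < ε)
    (hconv : ∀ ε : ℝ, 0 < ε → ∃ N : ℕ, ∀ n ≥ N, dist (u n) p < ε) :
    ∀ ε : ℝ, 0 < ε → ∃ N : ℕ, ∀ n ≥ N, intrinsicDist (u n) p < ε := by
  intro ε hε
  obtain ⟨N, hN⟩ := exists_forall_ge_chain_lt hcauchy (δ := fun k => ε / 2 / 2 / 2 ^ k)
    fun k => by positivity
  refine ⟨N, fun n hn => ?_⟩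
  obtain ⟨φ, rfl, hφ, hchain⟩ := hN n hn
  have hlim : Tendsto (u ∘ φ) atTop (𝓝 p) := (Metric.tendsto_atTop.2 hconv).comp hφ
  calc intrinsicDist (u (φ 0)) p ≤ ε / 2 :=
        intrinsicDist_le_of_hasSum h (hasSum_geometric_two' _) hchain hlim
    _ < ε := half_lt_self hε
end

section
/- Every Lipschitz connected metric space X is a 1-Lipschitz image of a complete ℝ-tree: there exist a complete metric space Y which is an ℝ-tree and a surjective 1-Lipschitz map γ : Y → X. -/
/-!
Fix `x₀ ∈ X` and, for every `x ∈ X`, a Lipschitz path from `x₀` to `x`; slowed down, it becomes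
a `1`-Lipschitz map `[0, ∞) → X`. Gluing one half-line per point of `X` at the origin gives the
hedgehog `Y`, and sending the spine of `x` along the path to `x` is a surjective `1`-Lipschitz
map `Y → X`. The hedgehog is complete and geodesic, and its Gromov product at the origin is the
smaller level on a common spine and `0` otherwise, hence ultrametric. By Gromov's basepoint
independence it is then `0`-hyperbolic, and geodesic `0`-hyperbolic spaces are ℝ-trees.
-/

open Filter Topology

section GromovProduct

variable {Y : Type*} [PseudoMetricSpace Y]

noncomputable def gromovProduct (w x y : Y) : ℝ :=
  (dist w x + dist w y - dist x y) / 2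

lemma gromovProduct_nonneg (w x y : Y) : 0 ≤ gromovProduct w x y := by
  unfold gromovProduct
  linarith [dist_triangle x w y, dist_comm w x]

def IsZeroHyperbolicAt (w : Y) : Prop :=
  ∀ x y z : Y, min (gromovProduct w x z) (gromovProduct w y z) ≤ gromovProduct w x y

variable (Y) in
def IsZeroHyperbolic : Prop :=
  ∀ w : Y, IsZeroHyperbolicAt w

theorem IsZeroHyperbolicAt.isZeroHyperbolic {o : Y} (h : IsZeroHyperbolicAt o) :
    IsZeroHyperbolic Y := by
  -- Expressed through Gromov products at `o`, the claim at `w` is the four-point inequality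
  -- `min ((x|z) + (y|w)) ((x|w) + (y|z)) ≤ (x|y) + (z|w)`, which these four instances give.
  intro w x y z
  have hxy := h x y z
  have hxy' := h x y w
  have hwz := h w z x
  have hwz' := h w z y
  have hl := min_le_left (gromovProduct w x z) (gromovProduct w y z)
  have hr := min_le_right (gromovProduct w x z) (gromovProduct w y z)
  simp only [gromovProduct, dist_comm z x, dist_comm z y, dist_comm x w, dist_comm y w]
    at hxy hxy' hwz hwz' hl hr ⊢
  rcases min_le_iff.1 hxy with _ | _ <;> rcases min_le_iff.1 hxy' with _ | _ <;>
    rcases min_le_iff.1 hwz with _ | _ <;> rcases min_le_iff.1 hwz' with _ | _ <;>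
    linarith

end GromovProduct

section RTree

variable {Y : Type*} [MetricSpace Y]

lemma gromovProduct_eq_dist_of_mem_metricSegment {a b p : Y} (hp : p ∈ MetricSegment a b) :
    gromovProduct a p b = dist a p := by
  have : dist a p + dist p b = dist a b := hp
  unfold gromovProduct
  linarith

lemma dist_eq_abs_sub_of_mem_metricSegment {a b p q : Y} (ha : IsZeroHyperbolicAt a)
    (hp : p ∈ MetricSegment a b) (hq : q ∈ MetricSegment a b) :
    dist p q = |dist a p - dist a q| := by
  refine le_antisymm ?_ (by simpa only [dist_comm p a, dist_comm q a] using abs_dist_sub_le p q a)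
  have h := ha p q b
  rw [gromovProduct_eq_dist_of_mem_metricSegment hp,
    gromovProduct_eq_dist_of_mem_metricSegment hq, gromovProduct] at h
  rcases le_total (dist a p) (dist a q) with hpq | hpq
  · rw [min_eq_left hpq] at h
    rw [abs_of_nonpos (by linarith)]
    linarith
  · rw [min_eq_right hpq] at h
    rw [abs_of_nonneg (by linarith)]
    linarith

lemma nonempty_isometryEquiv_metricSegment {a b : Y} (ha : IsZeroHyperbolicAt a)
    (hgeod : ∀ r ∈ Set.Icc 0 (dist a b), ∃ p ∈ MetricSegment a b, dist a p = r) :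
    Nonempty (MetricSegment a b ≃ᵢ Set.Icc (0 : ℝ) (dist a b)) := by
  have hmem : ∀ p ∈ MetricSegment a b, dist a p ∈ Set.Icc 0 (dist a b) := fun p hp => by
    have : dist a p + dist p b = dist a b := hp
    exact ⟨dist_nonneg, by linarith [dist_nonneg (x := p) (y := b)]⟩
  let ψ : MetricSegment a b → Set.Icc (0 : ℝ) (dist a b) := fun p => ⟨dist a p, hmem p p.2⟩
  have hψ : Isometry ψ := Isometry.of_dist_eq fun p q =>
    (dist_eq_abs_sub_of_mem_metricSegment ha p.2 q.2).symm
  have hsurj : Function.Surjective ψ := fun r => by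
    obtain ⟨p, hp, hpr⟩ := hgeod r r.2
    exact ⟨⟨p, hp⟩, Subtype.ext hpr⟩
  exact ⟨⟨Equiv.ofBijective ψ ⟨hψ.injective, hsurj⟩, hψ⟩⟩

lemma dist_eq_add_of_metricSegment_inter_eq {a b c : Y} (hb : IsZeroHyperbolicAt b)
    (hgeod : ∀ x : Y, ∀ r ∈ Set.Icc 0 (dist b x), ∃ p ∈ MetricSegment b x, dist b p = r)
    (h : MetricSegment a b ∩ MetricSegment b c = {b}) :
    dist a c = dist a b + dist b c := by
  set δ := gromovProduct b a c with hδ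
  have hδa : δ ≤ dist b a := by
    simp only [δ, gromovProduct]; linarith [dist_triangle b a c]
  have hδc : δ ≤ dist b c := by
    simp only [δ, gromovProduct]; linarith [dist_triangle b c a, dist_comm a c]
  obtain ⟨p, hp, hbp⟩ := hgeod a δ ⟨gromovProduct_nonneg _ _ _, hδa⟩
  obtain ⟨q, hq, hbq⟩ := hgeod c δ ⟨gromovProduct_nonneg _ _ _, hδc⟩
  -- `p` and `q` lie at distance `δ = (a|c)_b` from `b` towards `a` and `c`; 0-hyperbolicity
  -- at `b` forces `p = q ∈ [a,b] ∩ [b,c]`, hence `p = b` and `δ = 0`.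
  have hδq : δ ≤ gromovProduct b q a := by
    have h₂ := hb q a c
    rwa [gromovProduct_eq_dist_of_mem_metricSegment hq, hbq, ← hδ, min_self] at h₂
  have hpq : p = q := by
    have h₁ := hb p q a
    rw [gromovProduct_eq_dist_of_mem_metricSegment hp, hbp, min_eq_left hδq, gromovProduct,
      hbp, hbq] at h₁
    exact dist_le_zero.1 (by linarith)
  have hpb : p = b := by
    have hpa : dist a p + dist p b = dist a b := by
      have : dist b p + dist p a = dist b a := hp
      linarith [dist_comm a p, dist_comm p b, dist_comm a b]
    exact h.subset ⟨hpa, hpq ▸ hq⟩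
  rw [hpb, dist_self, hδ, gromovProduct] at hbp
  linarith [dist_comm a b]

theorem isRTree_of_isZeroHyperbolic (hY : IsZeroHyperbolic Y)
    (hgeod : ∀ a b : Y, ∀ r ∈ Set.Icc 0 (dist a b), ∃ p ∈ MetricSegment a b, dist a p = r) :
    IsRTree Y :=
  ⟨fun a b => nonempty_isometryEquiv_metricSegment (hY a) (hgeod a b),
    fun _ b _ => dist_eq_add_of_metricSegment_inter_eq (hY b) (hgeod b)⟩

end RTree

/-- The hedgehog with spines indexed by `ι`: copies of `[0, ∞)` glued at `0`, with the path
metric. The common origin is represented by spine `i₀` and level `0`. -/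
@[ext]
structure Hedgehog (ι : Type*) (i₀ : ι) where
  spine : ι
  level : ℝ
  level_nonneg : 0 ≤ level
  spine_eq_of_level_eq_zero : level = 0 → spine = i₀

namespace Hedgehog

variable {ι : Type*} {i₀ : ι}

open Classical in
noncomputable instance : Dist (Hedgehog ι i₀) :=
  ⟨fun p q => if p.spine = q.spine then |p.level - q.level| else p.level + q.level⟩

lemma dist_of_spine_eq {p q : Hedgehog ι i₀} (h : p.spine = q.spine) :
    dist p q = |p.level - q.level| :=
  if_pos h

lemma dist_of_spine_ne {p q : Hedgehog ι i₀} (h : p.spine ≠ q.spine) :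
    dist p q = p.level + q.level :=
  if_neg h

lemma abs_level_sub_le_dist (p q : Hedgehog ι i₀) : |p.level - q.level| ≤ dist p q := by
  by_cases h : p.spine = q.spine
  · exact (dist_of_spine_eq h).ge
  · rw [dist_of_spine_ne h, abs_le]
    constructor <;> linarith [p.level_nonneg, q.level_nonneg]

noncomputable instance : MetricSpace (Hedgehog ι i₀) where
  dist_self p := by rw [dist_of_spine_eq rfl, sub_self, abs_zero]
  dist_comm p q := by
    by_cases h : p.spine = q.spine
    · rw [dist_of_spine_eq h, dist_of_spine_eq h.symm, abs_sub_comm]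
    · rw [dist_of_spine_ne h, dist_of_spine_ne (Ne.symm h), add_comm]
  dist_triangle p q r := by
    have hpq := abs_level_sub_le_dist p q
    have hqr := abs_level_sub_le_dist q r
    by_cases hpr : p.spine = r.spine
    · rw [dist_of_spine_eq hpr]
      exact (abs_sub_le _ _ _).trans (add_le_add hpq hqr)
    rw [dist_of_spine_ne hpr]
    by_cases hpq' : p.spine = q.spine
    · rw [dist_of_spine_ne (hpq' ▸ hpr : q.spine ≠ r.spine)]
      linarith [le_abs_self (p.level - q.level), (dist_of_spine_eq hpq').ge]
    · rw [dist_of_spine_ne hpq']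
      linarith [neg_abs_le (q.level - r.level), q.level_nonneg]
  eq_of_dist_eq_zero {p q} hpq := by
    by_cases h : p.spine = q.spine
    · rw [dist_of_spine_eq h, abs_eq_zero, sub_eq_zero] at hpq
      exact Hedgehog.ext h hpq
    · rw [dist_of_spine_ne h] at hpq
      have hp : p.level = 0 := by linarith [p.level_nonneg, q.level_nonneg]
      have hq : q.level = 0 := by linarith [p.level_nonneg, q.level_nonneg]
      exact (h ((p.spine_eq_of_level_eq_zero hp).trans (q.spine_eq_of_level_eq_zero hq).symm)).elim

def center : Hedgehog ι i₀ := ⟨i₀, 0, le_rfl, fun _ => rfl⟩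

lemma dist_center (p : Hedgehog ι i₀) : dist p center = p.level := by
  by_cases h : p.spine = i₀
  · rw [dist_of_spine_eq h]
    simpa [center] using abs_of_nonneg p.level_nonneg
  · rw [dist_of_spine_ne h]
    simp [center]

noncomputable def onSpine (i : ι) (s : ℝ) : Hedgehog ι i₀ :=
  if hs : 0 < s then ⟨i, s, hs.le, fun h => absurd h hs.ne'⟩ else center

lemma onSpine_spine {i : ι} {s : ℝ} (hs : 0 < s) : (onSpine i s : Hedgehog ι i₀).spine = i := by
  simp [onSpine, hs]

lemma onSpine_level {i : ι} {s : ℝ} (hs : 0 ≤ s) : (onSpine i s : Hedgehog ι i₀).level = s := by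
  rcases hs.lt_or_eq with hs | rfl
  · simp [onSpine, hs]
  · simp [onSpine, center]

lemma dist_onSpine_of_spine_eq {i : ι} {s : ℝ} (hs : 0 ≤ s) {q : Hedgehog ι i₀} (hq : q.spine = i) :
    dist (onSpine i s) q = |s - q.level| := by
  rcases hs.lt_or_eq with hs | rfl
  · rw [dist_of_spine_eq ((onSpine_spine hs).trans hq.symm), onSpine_level hs.le]
  · rw [onSpine, dif_neg (lt_irrefl 0), dist_comm, dist_center, zero_sub, abs_neg,
      abs_of_nonneg q.level_nonneg]

lemma dist_onSpine_of_spine_ne {i : ι} {s : ℝ} (hs : 0 ≤ s) {q : Hedgehog ι i₀} (hq : q.spine ≠ i) :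
    dist (onSpine i s) q = s + q.level := by
  rcases hs.lt_or_eq with hs | rfl
  · rw [dist_of_spine_ne ((onSpine_spine hs).trans_ne hq.symm), onSpine_level hs.le]
  · rw [onSpine, dif_neg (lt_irrefl 0), dist_comm, dist_center, zero_add]

open Classical in
lemma gromovProduct_center (p q : Hedgehog ι i₀) :
    gromovProduct center p q = if p.spine = q.spine then min p.level q.level else 0 := by
  simp only [gromovProduct, dist_comm center, dist_center]
  split_ifs with h
  · rw [dist_of_spine_eq h]
    rcases le_total p.level q.level with hpq | hpq
    · rw [min_eq_left hpq, abs_of_nonpos (by linarith)]; ring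
    · rw [min_eq_right hpq, abs_of_nonneg (by linarith)]; ring
  · rw [dist_of_spine_ne h]; ring

lemma isZeroHyperbolicAt_center : IsZeroHyperbolicAt (center : Hedgehog ι i₀) := by
  intro p q r
  have hnonneg := gromovProduct_nonneg center p q
  by_cases hpr : p.spine = r.spine
  · by_cases hqr : q.spine = r.spine
    · simp only [gromovProduct_center, hpr, hqr, if_true]
      exact le_min (min_le_left _ _ |>.trans (min_le_left _ _))
        (min_le_right _ _ |>.trans (min_le_left _ _))
    · refine (min_le_right _ _).trans ?_
      rwa [gromovProduct_center q, if_neg hqr]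
  · refine (min_le_left _ _).trans ?_
    rwa [gromovProduct_center p, if_neg hpr]

lemma exists_mem_metricSegment_dist_eq (a b : Hedgehog ι i₀) (r : ℝ)
    (hr : r ∈ Set.Icc 0 (dist a b)) : ∃ p ∈ MetricSegment a b, dist a p = r := by
  suffices ∃ p, dist p a = r ∧ dist p b = dist a b - r by
    obtain ⟨p, hpa, hpb⟩ := this
    refine ⟨p, ?_, by rwa [dist_comm]⟩
    show dist a p + dist p b = dist a b
    rw [dist_comm a p]; linarith
  obtain ⟨hr0, hrD⟩ := hr
  have ha := a.level_nonneg
  have hb := b.level_nonneg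
  by_cases hab : a.spine = b.spine
  · rw [dist_of_spine_eq hab] at hrD ⊢
    rcases le_total a.level b.level with hle | hle
    · rw [abs_of_nonpos (by linarith)] at hrD
      refine ⟨onSpine a.spine (a.level + r), ?_, ?_⟩
      · rw [dist_onSpine_of_spine_eq (by linarith) rfl, add_sub_cancel_left, abs_of_nonneg hr0]
      · rw [dist_onSpine_of_spine_eq (by linarith) hab.symm, abs_of_nonpos (by linarith),
          abs_of_nonpos (by linarith)]
        ring
    · rw [abs_of_nonneg (by linarith)] at hrD
      refine ⟨onSpine a.spine (a.level - r), ?_, ?_⟩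
      · rw [dist_onSpine_of_spine_eq (by linarith) rfl, sub_sub_cancel_left, abs_neg,
          abs_of_nonneg hr0]
      · rw [dist_onSpine_of_spine_eq (by linarith) hab.symm, abs_of_nonneg (by linarith),
          abs_of_nonneg (by linarith)]
        ring
  · rw [dist_of_spine_ne hab] at hrD ⊢
    rcases le_total r a.level with hra | hra
    · refine ⟨onSpine a.spine (a.level - r), ?_, ?_⟩
      · rw [dist_onSpine_of_spine_eq (by linarith) rfl, sub_sub_cancel_left, abs_neg,
          abs_of_nonneg hr0]
      · rw [dist_onSpine_of_spine_ne (by linarith) (Ne.symm hab)]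
        ring
    · refine ⟨onSpine b.spine (r - a.level), ?_, ?_⟩
      · rw [dist_onSpine_of_spine_ne (by linarith) hab]
        ring
      · rw [dist_onSpine_of_spine_eq (by linarith) rfl, abs_of_nonpos (by linarith)]
        ring

theorem isRTree : IsRTree (Hedgehog ι i₀) :=
  isRTree_of_isZeroHyperbolic isZeroHyperbolicAt_center.isZeroHyperbolic
    exists_mem_metricSegment_dist_eq

lemma lipschitzWith_level : LipschitzWith 1 (level : Hedgehog ι i₀ → ℝ) :=
  LipschitzWith.of_dist_le_mul fun p q => by
    simpa [Real.dist_eq] using abs_level_sub_le_dist p q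

instance : CompleteSpace (Hedgehog ι i₀) := by
  refine Metric.complete_of_cauchySeq_tendsto fun u hu => ?_
  obtain ⟨L, hL⟩ : ∃ L, Tendsto (fun n => (u n).level) atTop (𝓝 L) :=
    cauchySeq_tendsto_of_complete (lipschitzWith_level.uniformContinuous.comp_cauchySeq hu)
  have hL0 : 0 ≤ L := ge_of_tendsto' hL fun n => (u n).level_nonneg
  rcases hL0.eq_or_lt with rfl | hLpos
  · refine ⟨center, tendsto_iff_dist_tendsto_zero.2 ?_⟩
    simpa only [dist_center] using hL
  -- Eventually the levels exceed `L / 2` and mutual distances stay below `L`,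
  -- which rules out two different spines.
  obtain ⟨N₁, hN₁⟩ := eventually_atTop.1 (hL.eventually (lt_mem_nhds (half_lt_self hLpos)))
  obtain ⟨N₂, hN₂⟩ := Metric.cauchySeq_iff.1 hu L hLpos
  set N := max N₁ N₂
  have hspine : ∀ n ≥ N, (u n).spine = (u N).spine := fun n hn => by
    by_contra h
    have := hN₂ n (le_of_max_le_right hn) N (le_max_right _ _)
    rw [dist_of_spine_ne h] at this
    linarith [hN₁ n (le_of_max_le_left hn), hN₁ N (le_max_left _ _)]
  refine ⟨onSpine (u N).spine L, Metric.tendsto_atTop.2 fun ε hε => ?_⟩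
  obtain ⟨N₃, hN₃⟩ := Metric.tendsto_atTop.1 hL ε hε
  refine ⟨max N N₃, fun n hn => ?_⟩
  rw [dist_comm, dist_onSpine_of_spine_eq hL0 (hspine n (le_of_max_le_left hn)), abs_sub_comm]
  exact hN₃ n (le_of_max_le_right hn)

lemma lipschitzWith_lift {X : Type*} [PseudoMetricSpace X] {c : ι → ℝ → X} {x₀ : X}
    (hc : ∀ i, LipschitzWith 1 (c i)) (hc0 : ∀ i, c i 0 = x₀) :
    LipschitzWith 1 fun p : Hedgehog ι i₀ => c p.spine p.level := by
  have hdist : ∀ i s t, dist (c i s) (c i t) ≤ |s - t| := fun i s t => by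
    simpa [Real.dist_eq] using (hc i).dist_le_mul s t
  have hray : ∀ (i : ι) {s : ℝ}, 0 ≤ s → dist (c i s) x₀ ≤ s := fun i s hs => by
    simpa [← hc0 i, abs_of_nonneg hs] using hdist i s 0
  refine LipschitzWith.of_dist_le_mul fun p q => ?_
  rw [NNReal.coe_one, one_mul]
  by_cases h : p.spine = q.spine
  · rw [dist_of_spine_eq h, h]
    exact hdist _ _ _
  · rw [dist_of_spine_ne h]
    calc dist (c p.spine p.level) (c q.spine q.level)
        ≤ dist (c p.spine p.level) x₀ + dist (c q.spine q.level) x₀ := dist_triangle_right _ _ _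
      _ ≤ p.level + q.level := add_le_add (hray _ p.level_nonneg) (hray _ q.level_nonneg)

end Hedgehog

open scoped NNReal in
lemma LipschitzConnected.exists_path {X : Type*} [MetricSpace X] (h : LipschitzConnected X)
    (x₀ x : X) : ∃ c : ℝ → X, LipschitzWith 1 c ∧ c 0 = x₀ ∧ ∃ T > 0, c T = x := by
  obtain ⟨f, ⟨K, hK⟩, hf0, hf1⟩ := h x₀ x
  -- Run the path at speed `1 / (K + 1)`: this avoids dividing by a zero constant.
  set T : ℝ≥0 := K + 1
  have hT : 0 < (T : ℝ) := by positivity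
  have hc := (hK.weaken (le_add_of_nonneg_right zero_le_one : K ≤ T)).comp
    ((LipschitzWith.projIcc zero_le_one).comp (lipschitzWith_smul (T : ℝ)⁻¹))
  refine ⟨fun s => f (Set.projIcc 0 1 zero_le_one ((T : ℝ)⁻¹ • s)), ?_, ?_, T, hT, ?_⟩
  · have hT1 : T * (1 * ‖(T : ℝ)⁻¹‖₊) = 1 := by
      rw [one_mul, nnnorm_inv, NNReal.nnnorm_eq]
      exact mul_inv_cancel₀ (by positivity)
    exact hT1 ▸ hc
  · simpa [Set.projIcc_left] using hf0
  · simpa [inv_mul_cancel₀ hT.ne', Set.projIcc_right] using hf1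

/-- Every Lipschitz connected metric space is a 1-Lipschitz image of a complete
ℝ-tree. -/
theorem lipschitz_connected_image_of_rtree (X : Type) [MetricSpace X]
    (h : LipschitzConnected X) :
    ∃ (Y : Type) (_ : MetricSpace Y) (_ : CompleteSpace Y), IsRTree Y ∧
      ∃ γ : Y → X, Function.Surjective γ ∧ LipschitzWith 1 γ := by
  rcases isEmpty_or_nonempty X with hX | ⟨⟨x₀⟩⟩
  · exact ⟨X, inferInstance, Metric.complete_of_cauchySeq_tendsto fun u _ => isEmptyElim (u 0),
      ⟨fun x => isEmptyElim x, fun x => isEmptyElim x⟩, id, Function.surjective_id,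
      LipschitzWith.id⟩
  choose c hc hc0 T hT hcT using h.exists_path x₀
  refine ⟨Hedgehog X x₀, inferInstance, inferInstance, Hedgehog.isRTree,
    fun p => c p.spine p.level, fun x => ⟨Hedgehog.onSpine x (T x), ?_⟩,
    Hedgehog.lipschitzWith_lift hc hc0⟩
  simp only [Hedgehog.onSpine_spine (hT x), Hedgehog.onSpine_level (hT x).le, hcT]
end

section
/- If a metric space X is compact, Lipschitz connected, and its intrinsic metric d_IX is totally bounded (for every ε > 0 there is a finite set F ⊆ X such that every x ∈ X satisfies d_IX(x,y) < ε for some y ∈ F), then there exist a compact metric space Y which is an ℝ-tree and a surjective 1-Lipschitz map γ : Y → X. -/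
/-!
Choose finite `2⁻ᵏ`-nets for the intrinsic metric and join every point of the `(k+1)`-st net to a
point of the `k`-th net by a `1`-Lipschitz path of length less than `2⁻ᵏ`. The chains through the
nets, with these paths as edges, form a tree. A point of it is a height `h` on a branch, and
`(p | q) = min (h p) (h q) (height of the branch point)` is an ultrametric-like Gromov product, so
`h p + h q - 2 (p | q)` is a geodesic pseudometric satisfying the four-point condition. The edge
lengths decay geometrically, so the tree is totally bounded and its completion is a compact
ℝ-tree. Walking along the paths is `1`-Lipschitz; its extension to the completion has compact
image containing every net, which is dense in `X`.
-/
def FourPointCondition (Z : Type*) [PseudoMetricSpace Z] : Prop :=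
  ∀ a b c d : Z, dist a b + dist c d ≤ max (dist a c + dist b d) (dist a d + dist b c)

open Set UniformSpace

section RTree

variable {Z : Type*} [MetricSpace Z]

lemma MetricallyConvex.exists_dist_eq (hZ : MetricallyConvex Z) (a b : Z) {t : ℝ} (ht₀ : 0 ≤ t)
    (ht : t ≤ dist a b) : ∃ z, dist a z = t ∧ dist z b = dist a b - t := by
  rcases (ht₀.trans ht).eq_or_lt with hab | hab
  · refine ⟨a, ?_, ?_⟩ <;> linarith [dist_self a]
  · obtain ⟨z, h₁, h₂⟩ := hZ a b (t / dist a b) ⟨by positivity, (div_le_one hab).2 ht⟩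
    refine ⟨z, by rw [h₁, div_mul_cancel₀ _ hab.ne'],
      by rw [h₂, sub_mul, div_mul_cancel₀ _ hab.ne', one_mul]⟩

namespace FourPointCondition

lemma dist_eq_sub_of_mem_metricSegment (h4 : FourPointCondition Z) {x y z w : Z}
    (hz : z ∈ MetricSegment x y) (hw : w ∈ MetricSegment x y) (hzw : dist x z ≤ dist x w) :
    dist z w = dist x w - dist x z := by
  have hz' : dist x z + dist z y = dist x y := hz
  have hw' : dist x w + dist w y = dist x y := hw
  have key := h4 z w x y
  rw [dist_comm z x, dist_comm w x, max_eq_right (by linarith)] at key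
  linarith [dist_triangle x z w]

lemma dist_eq_abs_of_mem_metricSegment (h4 : FourPointCondition Z) {x y z w : Z}
    (hz : z ∈ MetricSegment x y) (hw : w ∈ MetricSegment x y) :
    dist z w = |dist x z - dist x w| := by
  rcases le_total (dist x z) (dist x w) with hzw | hzw
  · rw [h4.dist_eq_sub_of_mem_metricSegment hz hw hzw, abs_of_nonpos (by linarith), neg_sub]
  · rw [dist_comm, h4.dist_eq_sub_of_mem_metricSegment hw hz hzw, abs_of_nonneg (by linarith)]

noncomputable def metricSegmentIsometryEquiv (h4 : FourPointCondition Z) (hZ : MetricallyConvex Z)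
    (x y : Z) :
    MetricSegment x y ≃ᵢ Icc (0 : ℝ) (dist x y) :=
  let φ : MetricSegment x y → Icc (0 : ℝ) (dist x y) := fun z =>
    ⟨dist x z, dist_nonneg, by linarith [z.2.out, dist_nonneg (x := z.1) (y := y)]⟩
  have hφ : Isometry φ := Isometry.of_dist_eq fun z w => by
    rw [Subtype.dist_eq, Subtype.dist_eq, Real.dist_eq,
      h4.dist_eq_abs_of_mem_metricSegment z.2 w.2]
  { toEquiv := Equiv.ofBijective φ ⟨hφ.injective, fun t => by
      obtain ⟨z, h₁, h₂⟩ := hZ.exists_dist_eq x y t.2.1 t.2.2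
      exact ⟨⟨z, show dist x z + dist z y = dist x y by linarith⟩, Subtype.ext h₁⟩⟩
    isometry_toFun := hφ }

lemma dist_eq_add_of_inter_eq (h4 : FourPointCondition Z) (hZ : MetricallyConvex Z) {x y z : Z}
    (hxyz : MetricSegment x y ∩ MetricSegment y z = {y}) :
    dist x z = dist x y + dist y z := by
  set g := (dist x y + dist y z - dist x z) / 2 with hg
  obtain ⟨w, hw₁, hw₂⟩ := hZ.exists_dist_eq y x (t := g) (by linarith [dist_triangle x y z])
    (by linarith [dist_triangle y x z, dist_comm x y])
  rw [dist_comm y x] at hw₂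
  have key := h4 w z x y
  rw [hw₂, dist_comm z y, dist_comm w y, hw₁, dist_comm z x,
    show g + dist x z = dist x y - g + dist y z by rw [hg]; ring, max_self] at key
  have hw : w ∈ MetricSegment x y ∩ MetricSegment y z :=
    ⟨show dist x w + dist w y = dist x y by linarith [dist_comm x w, dist_comm w y],
     show dist y w + dist w z = dist y z by linarith [dist_triangle y w z]⟩
  rw [hxyz] at hw
  subst hw
  linarith [dist_self w]

theorem isRTree (h4 : FourPointCondition Z) (hZ : MetricallyConvex Z) : IsRTree Z :=
  ⟨fun x y => ⟨h4.metricSegmentIsometryEquiv hZ x y⟩, fun _ _ _ => h4.dist_eq_add_of_inter_eq hZ⟩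

end FourPointCondition

end RTree

section DenseIsometry

variable {P Y : Type*} [PseudoMetricSpace P] [MetricSpace Y] {f : P → Y}

lemma FourPointCondition.of_denseRange (h4 : FourPointCondition P) (hf : Isometry f)
    (hd : DenseRange f) : FourPointCondition Y := by
  intro a b c d
  induction a, b using hd.induction_on₂ with
  | hp => exact isClosed_le (by fun_prop) (by fun_prop)
  | h a b =>
    induction c, d using hd.induction_on₂ with
    | hp => exact isClosed_le (by fun_prop) (by fun_prop)
    | h c d => simpa only [hf.dist_eq] using h4 a b c d

lemma MetricallyConvex.of_denseRange [CompactSpace Y]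
    (hP : ∀ a b : P, ∀ t ∈ Icc (0 : ℝ) 1,
      ∃ x, dist a x = t * dist a b ∧ dist x b = (1 - t) * dist a b)
    (hf : Isometry f) (hd : DenseRange f) : MetricallyConvex Y := by
  intro a b t ht
  -- the pairs admitting such a point form the projection of a compact set
  have hC : IsClosed {q : (Y × Y) × Y |
      dist q.1.1 q.2 = t * dist q.1.1 q.1.2 ∧ dist q.2 q.1.2 = (1 - t) * dist q.1.1 q.1.2} :=
    (isClosed_eq (by fun_prop) (by fun_prop)).inter (isClosed_eq (by fun_prop) (by fun_prop))
  induction a, b using hd.induction_on₂ with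
  | hp =>
    convert (hC.isCompact.image continuous_fst).isClosed using 1
    ext ⟨a, b⟩
    simp
  | h a b =>
    obtain ⟨x, h₁, h₂⟩ := hP a b t ht
    exact ⟨f x, by simpa only [hf.dist_eq] using h₁, by simpa only [hf.dist_eq] using h₂⟩

end DenseIsometry

lemma UniformSpace.Completion.compactSpace_of_totallyBounded {α : Type*} [UniformSpace α]
    (h : TotallyBounded (univ : Set α)) : CompactSpace (Completion α) := by
  have hrange : TotallyBounded (range ((↑) : α → Completion α)) := by
    simpa only [image_univ] using h.image (Completion.uniformContinuous_coe α)
  rw [← totallyBounded_closure, Completion.denseRange_coe.closure_range] at hrange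
  exact ⟨isCompact_iff_totallyBounded_isComplete.2 ⟨hrange, isComplete_univ⟩⟩

lemma Metric.totallyBounded_univ_of_approx {P : Type*} [PseudoMetricSpace P]
    (h : ∀ ε > 0, ∃ s : Set P, TotallyBounded s ∧ ∀ p, ∃ q ∈ s, dist p q < ε) :
    TotallyBounded (univ : Set P) := by
  refine Metric.totallyBounded_iff.2 fun ε hε => ?_
  obtain ⟨s, hs, hps⟩ := h (ε / 2) (half_pos hε)
  obtain ⟨t, ht, hst⟩ := Metric.totallyBounded_iff.1 hs (ε / 2) (half_pos hε)
  refine ⟨t, ht, fun p _ => ?_⟩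
  obtain ⟨q, hq, hpq⟩ := hps p
  obtain ⟨y, hy, hqy⟩ := mem_iUnion₂.1 (hst hq)
  exact mem_iUnion₂.2 ⟨y, hy, by
    rw [Metric.mem_ball] at hqy ⊢; linarith [dist_triangle p q y]⟩

lemma LipschitzWith.if_le {X : Type*} [PseudoMetricSpace X] {K : NNReal} {f g : ℝ → X} {a : ℝ}
    (hf : LipschitzWith K f) (hg : LipschitzWith K g) (ha : f a = g a) :
    LipschitzWith K fun x => if x ≤ a then f x else g x := by
  have cross : ∀ x y, x ≤ a → a < y → dist (f x) (g y) ≤ K * dist x y := fun x y hx hy => by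
    calc dist (f x) (g y) ≤ dist (f x) (f a) + dist (g a) (g y) := ha ▸ dist_triangle _ _ _
      _ ≤ K * dist x a + K * dist a y := add_le_add (hf.dist_le_mul x a) (hg.dist_le_mul a y)
      _ = K * dist x y := by
        rw [Real.dist_eq, Real.dist_eq, Real.dist_eq, abs_of_nonpos (by linarith),
          abs_of_neg (by linarith), abs_of_neg (by linarith)]
        ring
  refine LipschitzWith.of_dist_le_mul fun x y => ?_
  by_cases hx : x ≤ a <;> by_cases hy : y ≤ a <;> simp only [hx, hy, if_true, if_false]
  · exact hf.dist_le_mul x y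
  · exact cross x y hx (not_le.1 hy)
  · rw [dist_comm, dist_comm x]; exact cross y x hy (not_le.1 hx)
  · exact hg.dist_le_mul x y

/-- `M p q` behaves as the Gromov product `(p | q)` at the root of an ℝ-tree, with `H p = (p | p)`
the distance from `p` to the root. -/
structure IsTreeMeet {P : Type*} (H : P → ℝ) (M : P → P → ℝ) : Prop where
  nonneg : ∀ p q, 0 ≤ M p q
  comm : ∀ p q, M p q = M q p
  self : ∀ p, M p p = H p
  le_left : ∀ p q, M p q ≤ H p
  min_le : ∀ p q r, min (M p q) (M q r) ≤ M p r

namespace IsTreeMeet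

variable {P : Type*} {H : P → ℝ} {M : P → P → ℝ}

lemma le_right (hM : IsTreeMeet H M) (p q : P) : M p q ≤ H q :=
  hM.comm p q ▸ hM.le_left q p

abbrev toPseudoMetricSpace (hM : IsTreeMeet H M) : PseudoMetricSpace P where
  dist p q := H p + H q - 2 * M p q
  dist_self p := by rw [hM.self]; ring
  dist_comm p q := by rw [hM.comm]; ring
  dist_triangle p q r := by
    have := hM.min_le p q r
    have := hM.le_right p q
    have := hM.le_left q r
    rcases min_cases (M p q) (M q r) with ⟨h, -⟩ | ⟨h, -⟩ <;> linarith

lemma dist_eq (hM : IsTreeMeet H M) (p q : P) :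
    letI := hM.toPseudoMetricSpace; dist p q = H p + H q - 2 * M p q :=
  rfl

lemma fourPointCondition (hM : IsTreeMeet H M) :
    letI := hM.toPseudoMetricSpace; FourPointCondition P := by
  intro a b c d
  have h₁ := hM.min_le a c b
  have h₂ := hM.min_le a d b
  have h₃ := hM.min_le c a d
  have h₄ := hM.min_le c b d
  rw [hM.comm c b] at h₁ h₄
  rw [hM.comm d b] at h₂
  rw [hM.comm c a] at h₃
  have key : min (M a c + M b d) (M a d + M b c) ≤ M a b + M c d := by
    rcases le_total (M a c + M b d) (M a d + M b c) with h | h <;>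
      simp only [min_eq_left h, min_eq_right h] <;>
      rcases min_le_iff.1 h₁ with h₁ | h₁ <;> rcases min_le_iff.1 h₂ with h₂ | h₂ <;>
      rcases min_le_iff.1 h₃ with h₃ | h₃ <;> rcases min_le_iff.1 h₄ with h₄ | h₄ <;> linarith
  simp only [hM.dist_eq]
  rcases min_le_iff.1 key with h | h
  · exact le_max_of_le_left (by linarith)
  · exact le_max_of_le_right (by linarith)

/-- `hanc` supplies the ancestors of each `p` at all heights `t ≤ H p`. -/
lemma exists_dist_eq (hM : IsTreeMeet H M)
    (hanc : ∀ p t, 0 ≤ t → t ≤ H p → ∃ z, H z = t ∧ ∀ q, M z q = min t (M p q)) :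
    letI := hM.toPseudoMetricSpace
    ∀ p q : P, ∀ t ∈ Icc (0 : ℝ) 1,
      ∃ z, dist p z = t * dist p q ∧ dist z q = (1 - t) * dist p q := by
  let := hM.toPseudoMetricSpace
  have toward_root : ∀ p q τ, 0 ≤ τ → τ ≤ H p - M p q →
      ∃ z, dist p z = τ ∧ dist z q = dist p q - τ := by
    intro p q τ hτ₀ hτ
    obtain ⟨z, hz, hzM⟩ := hanc p (H p - τ) (by linarith [hM.nonneg p q]) (by linarith)
    refine ⟨z, ?_, ?_⟩
    · rw [hM.dist_eq, hz, hM.comm, hzM, hM.self, min_eq_left (by linarith)]; ring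
    · rw [hM.dist_eq, hM.dist_eq, hz, hzM, min_eq_right (by linarith)]; ring
  intro p q t ⟨ht₀, ht₁⟩
  have hτ₀ : 0 ≤ t * dist p q := mul_nonneg ht₀ dist_nonneg
  have hτ₁ : t * dist p q ≤ dist p q := mul_le_of_le_one_left dist_nonneg ht₁
  rcases le_total (t * dist p q) (H p - M p q) with h | h
  · obtain ⟨z, h₁, h₂⟩ := toward_root p q _ hτ₀ h
    exact ⟨z, h₁, by rw [h₂]; ring⟩
  · obtain ⟨z, h₁, h₂⟩ := toward_root q p (dist p q - t * dist p q) (by linarith)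
      (by rw [hM.comm q p]; linarith [hM.dist_eq p q])
    exact ⟨z, by rw [dist_comm, h₂, dist_comm]; ring, by rw [dist_comm, h₁]; ring⟩

end IsTreeMeet

section IntrinsicDist

variable {X : Type*} [MetricSpace X]

def pathLipschitzConstants (x y : X) : Set ℝ :=
  {K : ℝ | 0 ≤ K ∧ ∃ f : Icc (0 : ℝ) 1 → X,
    LipschitzWith K.toNNReal f ∧ f ⟨0, by norm_num⟩ = x ∧ f ⟨1, by norm_num⟩ = y}

lemma intrinsicDist_eq_sInf (x y : X) : intrinsicDist x y = sInf (pathLipschitzConstants x y) :=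
  rfl

lemma LipschitzConnected.pathLipschitzConstants_nonempty (h : LipschitzConnected X) (x y : X) :
    (pathLipschitzConstants x y).Nonempty := by
  obtain ⟨f, ⟨K, hK⟩, h₀, h₁⟩ := h x y
  exact ⟨K, K.coe_nonneg, f, by simpa using hK, h₀, h₁⟩

lemma dist_le_of_mem_pathLipschitzConstants {x y : X} {K : ℝ}
    (hK : K ∈ pathLipschitzConstants x y) : dist x y ≤ K := by
  obtain ⟨hK, f, hf, h₀, h₁⟩ := hK
  have := hf.dist_le_mul ⟨0, by norm_num⟩ ⟨1, by norm_num⟩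
  rwa [h₀, h₁, Real.coe_toNNReal _ hK, Subtype.dist_eq, dist_zero_left, norm_one, mul_one] at this

lemma LipschitzConnected.dist_le_intrinsicDist (h : LipschitzConnected X) (x y : X) :
    dist x y ≤ intrinsicDist x y :=
  intrinsicDist_eq_sInf x y ▸
    le_csInf (h.pathLipschitzConstants_nonempty x y) fun _ => dist_le_of_mem_pathLipschitzConstants

lemma intrinsicDist_comm (x y : X) : intrinsicDist x y = intrinsicDist y x := by
  have hσ : LipschitzWith 1 unitInterval.symm := LipschitzWith.of_dist_le_mul fun s t => by
    simp only [Subtype.dist_eq, unitInterval.coe_symm_eq, Real.dist_eq, NNReal.coe_one, one_mul]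
    rw [show (1 : ℝ) - s - (1 - t) = t - s by ring, abs_sub_comm]
  have reverse : ∀ x y : X, pathLipschitzConstants x y ⊆ pathLipschitzConstants y x := by
    rintro x y K ⟨hK, f, hf, h₀, h₁⟩
    exact ⟨hK, f ∘ unitInterval.symm, by simpa using hf.comp hσ,
      by simpa [unitInterval.symm_zero] using h₁, by simpa [unitInterval.symm_one] using h₀⟩
  rw [intrinsicDist_eq_sInf, intrinsicDist_eq_sInf, (reverse x y).antisymm (reverse y x)]

lemma LipschitzWith.exists_lipschitzWith_one_of_unitInterval {K : ℝ} (hK : 0 ≤ K)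
    {f : Icc (0 : ℝ) 1 → X} (hf : LipschitzWith K.toNNReal f) :
    ∃ g : ℝ → X, LipschitzWith 1 g ∧ g 0 = f ⟨0, by norm_num⟩ ∧ g K = f ⟨1, by norm_num⟩ := by
  refine ⟨fun τ => f (projIcc 0 1 zero_le_one (τ / K)), LipschitzWith.of_dist_le_mul fun a b => ?_,
    by simp, ?_⟩
  · have hdiv : K * |a / K - b / K| ≤ |a - b| := by
      rcases hK.eq_or_lt with rfl | hK
      · simp
      · rw [← sub_div, abs_div, abs_of_pos hK, mul_div_cancel₀ _ hK.ne']
    calc dist (f _) (f _)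
        ≤ K * |(projIcc 0 1 zero_le_one (a / K) : ℝ) - projIcc 0 1 zero_le_one (b / K)| := by
          simpa [Real.coe_toNNReal _ hK, Subtype.dist_eq, Real.dist_eq] using hf.dist_le_mul _ _
      _ ≤ K * |a / K - b / K| := mul_le_mul_of_nonneg_left (abs_projIcc_sub_projIcc _) hK
      _ ≤ 1 * dist a b := by rw [one_mul, Real.dist_eq]; exact hdiv
  · rcases hK.eq_or_lt with rfl | hK
    · have := dist_le_of_mem_pathLipschitzConstants ⟨le_rfl, f, hf, rfl, rfl⟩
      simpa using (dist_le_zero.1 this)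
    · simp [div_self hK.ne']

lemma LipschitzConnected.exists_path_s13 (h : LipschitzConnected X) (x y : X) :
    ∃ ℓ, 0 ≤ ℓ ∧ ℓ ≤ 2 * intrinsicDist x y ∧
      ∃ g : ℝ → X, LipschitzWith 1 g ∧ g 0 = x ∧ g ℓ = y := by
  rcases eq_or_ne x y with rfl | hxy
  · exact ⟨0, le_rfl, by linarith [dist_self x, h.dist_le_intrinsicDist x x],
      fun _ => x, LipschitzWith.const' x, rfl, rfl⟩
  have hpos : 0 < intrinsicDist x y := (dist_pos.2 hxy).trans_le (h.dist_le_intrinsicDist x y)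
  obtain ⟨K, ⟨hK, f, hf, h₀, h₁⟩, hKlt⟩ := exists_lt_of_csInf_lt
    (h.pathLipschitzConstants_nonempty x y)
    (intrinsicDist_eq_sInf x y ▸ (by linarith : intrinsicDist x y < 2 * intrinsicDist x y))
  obtain ⟨g, hg, hg₀, hgK⟩ := hf.exists_lipschitzWith_one_of_unitInterval hK
  exact ⟨K, hK, hKlt.le, g, hg, hg₀.trans h₀, hgK.trans h₁⟩

end IntrinsicDist

universe u

structure PathNets (X : Type u) [MetricSpace X] where
  root : X
  net : ℕ → Set X
  finite_net : ∀ k, (net k).Finite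
  len : X → X → ℝ
  path : X → X → ℝ → X
  len_nonneg : ∀ x y, 0 ≤ len x y
  lipschitzWith_path : ∀ x y, LipschitzWith 1 (path x y)
  path_zero : ∀ x y, path x y 0 = x
  path_len : ∀ x y, path x y (len x y) = y
  exists_len_lt : ∀ k, ∀ y ∈ net (k + 1), ∃ x ∈ net k, len x y < (1 / 2) ^ k

namespace PathNets

variable {X : Type u} [MetricSpace X] (T : PathNets X)

def height (s : ℕ → X) (n : ℕ) : ℝ := ∑ k ∈ Finset.range n, T.len (s k) (s (k + 1))

lemma height_succ (s : ℕ → X) (n : ℕ) :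
    T.height s (n + 1) = T.height s n + T.len (s n) (s (n + 1)) :=
  Finset.sum_range_succ _ _

lemma height_nonneg (s : ℕ → X) (n : ℕ) : 0 ≤ T.height s n :=
  Finset.sum_nonneg fun _ _ => T.len_nonneg _ _

lemma height_mono (s : ℕ → X) : Monotone (T.height s) :=
  monotone_nat_of_le_succ fun n => by rw [height_succ]; linarith [T.len_nonneg (s n) (s (n + 1))]

lemma height_congr {s t : ℕ → X} {n : ℕ} (hst : ∀ k ≤ n, s k = t k) :
    T.height s n = T.height t n :=
  Finset.sum_congr rfl fun k hk => by
    rw [hst k (by simp at hk; omega), hst (k + 1) (by simp at hk; omega)]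

/-- The concatenation of the paths `s 0 → s 1 → ⋯ → s n`, parametrised by height. -/
noncomputable def ray (s : ℕ → X) : ℕ → ℝ → X
  | 0 => fun _ => s 0
  | n + 1 => fun h =>
    if h ≤ T.height s n then ray s n h else T.path (s n) (s (n + 1)) (h - T.height s n)

lemma ray_succ (s : ℕ → X) (n : ℕ) (h : ℝ) : T.ray s (n + 1) h =
    if h ≤ T.height s n then T.ray s n h else T.path (s n) (s (n + 1)) (h - T.height s n) :=
  rfl

lemma ray_height (s : ℕ → X) (n : ℕ) : T.ray s n (T.height s n) = s n := by
  induction n with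
  | zero => rfl
  | succ n ih =>
    rw [ray_succ]
    split_ifs with h
    · have hlen : T.len (s n) (s (n + 1)) = 0 := by
        rw [height_succ] at h; linarith [T.len_nonneg (s n) (s (n + 1))]
      rw [height_succ, hlen, add_zero, ih, ← T.path_len (s n) (s (n + 1)), hlen, T.path_zero]
    · rw [height_succ, add_sub_cancel_left, T.path_len]

lemma lipschitzWith_ray (s : ℕ → X) (n : ℕ) : LipschitzWith 1 (T.ray s n) := by
  induction n with
  | zero => exact LipschitzWith.const' (s 0)
  | succ n ih =>
    have hpath : LipschitzWith 1 fun h => T.path (s n) (s (n + 1)) (h - T.height s n) :=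
      LipschitzWith.of_dist_le_mul fun a b => by
        have := (T.lipschitzWith_path (s n) (s (n + 1))).dist_le_mul (a - T.height s n)
          (b - T.height s n)
        rwa [Real.dist_eq, sub_sub_sub_cancel_right, ← Real.dist_eq] at this
    exact ih.if_le hpath (by rw [ray_height, sub_self, path_zero])

lemma ray_of_le (s : ℕ → X) {j n : ℕ} (hjn : j ≤ n) {h : ℝ} (hh : h ≤ T.height s j) :
    T.ray s n h = T.ray s j h := by
  induction n, hjn using Nat.le_induction with
  | base => rfl
  | succ n hjn ih => rw [ray_succ, if_pos (hh.trans (T.height_mono s hjn)), ih]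

lemma ray_congr {s t : ℕ → X} {n : ℕ} (hst : ∀ k ≤ n, s k = t k) : T.ray s n = T.ray t n := by
  induction n with
  | zero => funext h; exact hst 0 le_rfl
  | succ n ih =>
    funext h
    rw [ray_succ, ray_succ, ih fun k hk => hst k (by omega),
      T.height_congr fun k hk => hst k (by omega), hst n (by omega), hst (n + 1) le_rfl]

/-- A vertex of the tree: the chain `root = pt 0, pt 1, …, pt level`. Setting `pt k = root` beyond
`level` leaves only finitely many chains of each level. -/
@[ext] structure Chain where
  level : ℕ
  pt : ℕ → X
  pt_zero : pt 0 = T.root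
  pt_succ_mem : ∀ k < level, pt (k + 1) ∈ T.net k
  len_lt : ∀ k, k + 2 ≤ level → T.len (pt (k + 1)) (pt (k + 2)) < (1 / 2) ^ k
  pt_of_level_lt : ∀ k, level < k → pt k = T.root

def Chain.nil : T.Chain where
  level := 0
  pt _ := T.root
  pt_zero := rfl
  pt_succ_mem _ h := absurd h (Nat.not_lt_zero _)
  len_lt _ h := absurd h (by omega)
  pt_of_level_lt _ _ := rfl

variable {T}

namespace Chain

def height (v : T.Chain) : ℝ := T.height v.pt v.level

open Classical in
/-- The level of the last common ancestor of `v` and `w`. -/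
noncomputable def commonLevel (v w : T.Chain) : ℕ :=
  Nat.findGreatest (fun k => ∀ j ≤ k, v.pt j = w.pt j) (min v.level w.level)

noncomputable def meet (v w : T.Chain) : ℝ := T.height v.pt (v.commonLevel w)

variable (u v w : T.Chain)

lemma pt_eq_of_le_commonLevel {j : ℕ} (hj : j ≤ v.commonLevel w) : v.pt j = w.pt j := by
  classical
  refine Nat.findGreatest_spec (P := fun k => ∀ j ≤ k, v.pt j = w.pt j) (Nat.zero_le _)
    (fun j hj => ?_) j hj
  rw [Nat.le_zero.1 hj, v.pt_zero, w.pt_zero]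

lemma le_commonLevel {k : ℕ} (hv : k ≤ v.level) (hw : k ≤ w.level)
    (h : ∀ j ≤ k, v.pt j = w.pt j) : k ≤ v.commonLevel w := by
  classical
  exact Nat.le_findGreatest (le_min hv hw) h

lemma commonLevel_le_left : v.commonLevel w ≤ v.level := by
  classical exact (Nat.findGreatest_le _).trans (min_le_left _ _)

lemma commonLevel_le_right : v.commonLevel w ≤ w.level := by
  classical exact (Nat.findGreatest_le _).trans (min_le_right _ _)

lemma commonLevel_comm : v.commonLevel w = w.commonLevel v := by
  have key : ∀ v w : T.Chain, v.commonLevel w ≤ w.commonLevel v := fun v w =>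
    le_commonLevel _ _ (commonLevel_le_right _ _) (commonLevel_le_left _ _)
      fun _ hj => (pt_eq_of_le_commonLevel _ _ hj).symm
  exact (key v w).antisymm (key w v)

lemma commonLevel_self : v.commonLevel v = v.level :=
  le_antisymm (commonLevel_le_left _ _) (le_commonLevel _ _ le_rfl le_rfl fun _ _ => rfl)

lemma min_commonLevel_le : min (u.commonLevel v) (v.commonLevel w) ≤ u.commonLevel w :=
  le_commonLevel _ _ ((min_le_left _ _).trans (commonLevel_le_left _ _))
    ((min_le_right _ _).trans (commonLevel_le_right _ _)) fun _ hj =>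
    (pt_eq_of_le_commonLevel u v (hj.trans (min_le_left _ _))).trans
      (pt_eq_of_le_commonLevel v w (hj.trans (min_le_right _ _)))

lemma meet_comm : v.meet w = w.meet v := by
  rw [meet, meet, commonLevel_comm w v]
  exact T.height_congr fun _ hj => pt_eq_of_le_commonLevel _ _ hj

lemma meet_self : v.meet v = v.height := by
  rw [meet, commonLevel_self, height]

lemma meet_nonneg : 0 ≤ v.meet w := T.height_nonneg _ _

lemma meet_le_height : v.meet w ≤ v.height := T.height_mono _ (commonLevel_le_left _ _)

lemma min_meet_le : min (u.meet v) (v.meet w) ≤ u.meet w := by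
  rcases le_total (u.commonLevel v) (v.commonLevel w) with h | h
  · exact (min_le_left _ _).trans
      (T.height_mono _ (le_min le_rfl h |>.trans (min_commonLevel_le u v w)))
  · refine (min_le_right _ _).trans ?_
    rw [meet, T.height_congr fun j hj => (pt_eq_of_le_commonLevel u v (hj.trans h)).symm]
    exact T.height_mono _ (le_min h le_rfl |>.trans (min_commonLevel_le u v w))

lemma ray_eq_of_le_meet {h : ℝ} (hh : h ≤ v.meet w) :
    T.ray v.pt v.level h = T.ray w.pt w.level h := by
  have hw : h ≤ T.height w.pt (v.commonLevel w) := by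
    rwa [← T.height_congr fun j hj => pt_eq_of_le_commonLevel v w hj]
  rw [T.ray_of_le _ (commonLevel_le_left v w) hh,
    T.ray_congr fun j hj => pt_eq_of_le_commonLevel v w hj,
    T.ray_of_le _ (commonLevel_le_right v w) hw]

lemma height_nonneg : 0 ≤ v.height := T.height_nonneg _ _

def truncate (n : ℕ) : T.Chain where
  level := min n v.level
  pt j := if j ≤ n then v.pt j else T.root
  pt_zero := by simp [v.pt_zero]
  pt_succ_mem k hk := by
    rw [if_pos (by omega)]; exact v.pt_succ_mem k (by omega)
  len_lt k hk := by
    rw [if_pos (by omega), if_pos (by omega)]; exact v.len_lt k (by omega)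
  pt_of_level_lt k hk := by
    split_ifs with h
    · exact v.pt_of_level_lt k (by omega)
    · rfl

lemma meet_truncate (n : ℕ) :
    v.meet (v.truncate n) = T.height v.pt (min n v.level) := by
  have : v.commonLevel (v.truncate n) = min n v.level :=
    le_antisymm (commonLevel_le_right _ _)
      (le_commonLevel _ _ (min_le_right _ _) le_rfl fun j hj => (if_pos (by omega)).symm)
  rw [meet, this]

lemma height_truncate (n : ℕ) :
    (v.truncate n).height = T.height v.pt (min n v.level) :=
  T.height_congr fun j hj => if_pos (by simp only [truncate] at hj; omega)

lemma height_sub_height_le {n : ℕ} (hn : 1 ≤ n) :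
    v.height - T.height v.pt (min n v.level) ≤ 4 * (1 / 2) ^ n := by
  rcases le_total v.level n with h | h
  · rw [min_eq_right h, height, sub_self]; positivity
  have hterm : ∀ k ∈ Finset.Ico n v.level, T.len (v.pt k) (v.pt (k + 1)) ≤ 2 * (1 / 2) ^ k := by
    intro k hk
    obtain ⟨hnk, hkl⟩ := Finset.mem_Ico.1 hk
    obtain ⟨j, rfl⟩ : ∃ j, k = j + 1 := ⟨k - 1, by omega⟩
    have := v.len_lt j (by omega)
    rw [pow_succ]; linarith
  calc v.height - T.height v.pt (min n v.level)
      = ∑ k ∈ Finset.Ico n v.level, T.len (v.pt k) (v.pt (k + 1)) := by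
        rw [min_eq_left h, height, PathNets.height, PathNets.height, Finset.sum_Ico_eq_sub _ h]
    _ ≤ ∑ k ∈ Finset.Ico n v.level, 2 * (1 / 2 : ℝ) ^ k := Finset.sum_le_sum hterm
    _ ≤ 2 * ((1 / 2) ^ n / (1 - 1 / 2)) := by
        rw [← Finset.mul_sum]
        gcongr
        exact geom_sum_Ico_le_of_lt_one (by norm_num) (by norm_num)
    _ = 4 * (1 / 2) ^ n := by ring

lemma pt_mem_of_level_le {n : ℕ} (hn : v.level ≤ n) (k : ℕ) :
    v.pt k ∈ insert T.root (⋃ j ∈ Iio n, T.net j) := by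
  rcases Nat.lt_or_ge v.level k with hk | hk
  · exact .inl (v.pt_of_level_lt k hk)
  · cases k with
    | zero => exact .inl v.pt_zero
    | succ j => exact .inr (mem_iUnion₂.2 ⟨j, by simp only [mem_Iio]; omega, v.pt_succ_mem j hk⟩)

def snoc (y : X) (hy : y ∈ T.net v.level)
    (hlen : ∀ k, v.level = k + 1 → T.len (v.pt (k + 1)) y < (1 / 2) ^ k) : T.Chain where
  level := v.level + 1
  pt j := if j = v.level + 1 then y else v.pt j
  pt_zero := by rw [if_neg (by omega), v.pt_zero]
  pt_succ_mem k hk := by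
    split_ifs with h
    · rwa [show k = v.level by omega]
    · exact v.pt_succ_mem k (by omega)
  len_lt k hk := by
    rw [if_neg (by omega)]
    split_ifs with h
    · exact hlen k (by omega)
    · exact v.len_lt k (by omega)
  pt_of_level_lt k hk := by rw [if_neg (by omega), v.pt_of_level_lt k (by omega)]

end Chain

variable (T) in
lemma finite_setOf_level_le (n : ℕ) : {v : T.Chain | v.level ≤ n}.Finite := by
  have hS := ((finite_Iio n).biUnion fun j _ => T.finite_net j).insert T.root
  refine Finite.of_finite_image (f := fun v : T.Chain => (v.level, fun i : Fin (n + 1) => v.pt i))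
    (((finite_Iic n).prod (Finite.pi fun _ => hS)).subset ?_) ?_
  · rintro _ ⟨v, hv, rfl⟩
    exact ⟨hv, fun i _ => v.pt_mem_of_level_le hv i⟩
  · intro v hv w hw hvw
    obtain ⟨hl, hpt⟩ := Prod.mk.inj hvw
    refine Chain.ext hl (funext fun k => ?_)
    by_cases hk : k ≤ n
    · exact congrFun hpt ⟨k, by omega⟩
    · rw [v.pt_of_level_lt k (by simp at hv; omega), w.pt_of_level_lt k (by simp at hw; omega)]

variable (T) in
lemma exists_chain {k : ℕ} {y : X} (hy : y ∈ T.net k) :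
    ∃ v : T.Chain, v.level = k + 1 ∧ v.pt (k + 1) = y := by
  induction k generalizing y with
  | zero =>
    exact ⟨(Chain.nil T).snoc y hy fun k h => absurd h (by simp [Chain.nil]), rfl,
      by simp [Chain.snoc, Chain.nil]⟩
  | succ k ih =>
    obtain ⟨x, hx, hxy⟩ := T.exists_len_lt k y hy
    obtain ⟨v, hv, rfl⟩ := ih hx
    exact ⟨v.snoc y (hv ▸ hy) fun j hj => by rwa [show j = k by omega], by simp [Chain.snoc, hv],
      by simp [Chain.snoc, hv]⟩

variable (T) in
/-- The point at height `height` on the branch ending at `chain`; points on a common initial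
segment of two branches are at distance `0`. -/
structure Point where
  chain : T.Chain
  height : ℝ
  height_nonneg : 0 ≤ height
  height_le : height ≤ chain.height

noncomputable def Point.meet (p q : T.Point) : ℝ :=
  min (min p.height q.height) (p.chain.meet q.chain)

variable (T) in
lemma isTreeMeet : IsTreeMeet (Point.height (T := T)) Point.meet where
  nonneg p q := le_min (le_min p.height_nonneg q.height_nonneg) (Chain.meet_nonneg _ _)
  comm p q := by rw [Point.meet, Point.meet, min_comm p.height, Chain.meet_comm]
  self p := by rw [Point.meet, min_self, Chain.meet_self, min_eq_left p.height_le]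
  le_left p q := (min_le_left _ _).trans (min_le_left _ _)
  min_le p q r := le_min
    (le_min ((min_le_left _ _).trans ((min_le_left _ _).trans (min_le_left _ _)))
      ((min_le_right _ _).trans ((min_le_left _ _).trans (min_le_right _ _))))
    ((min_le_min (min_le_right _ _) (min_le_right _ _)).trans (Chain.min_meet_le _ _ _))

noncomputable instance : PseudoMetricSpace T.Point := (isTreeMeet T).toPseudoMetricSpace

namespace Point

lemma dist_def (p q : T.Point) : dist p q = p.height + q.height - 2 * p.meet q := rfl

lemma dist_eq_abs_of_chain_eq {p q : T.Point} (h : p.chain = q.chain) :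
    dist p q = |p.height - q.height| := by
  rw [dist_def, meet, h, Chain.meet_self,
    min_eq_left ((min_le_right _ _).trans q.height_le)]
  rcases le_total p.height q.height with hpq | hpq
  · rw [min_eq_left hpq, abs_of_nonpos (by linarith)]; ring
  · rw [min_eq_right hpq, abs_of_nonneg (by linarith)]; ring

noncomputable def eval (p : T.Point) : X := T.ray p.chain.pt p.chain.level p.height

lemma dist_eval_ray_le (p : T.Point) {h : ℝ} (hh : h ≤ p.height) :
    dist p.eval (T.ray p.chain.pt p.chain.level h) ≤ p.height - h := by
  have := (T.lipschitzWith_ray p.chain.pt p.chain.level).dist_le_mul p.height h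
  rwa [NNReal.coe_one, one_mul, Real.dist_eq, abs_of_nonneg (by linarith)] at this

lemma lipschitzWith_eval : LipschitzWith 1 (eval : T.Point → X) := by
  refine LipschitzWith.of_dist_le_mul fun p q => ?_
  have hray := Chain.ray_eq_of_le_meet p.chain q.chain (min_le_right _ _ : p.meet q ≤ _)
  calc dist p.eval q.eval
      ≤ dist p.eval (T.ray p.chain.pt p.chain.level (p.meet q)) +
          dist (T.ray q.chain.pt q.chain.level (p.meet q)) q.eval :=
        hray ▸ dist_triangle _ _ _
    _ ≤ (p.height - p.meet q) + (q.height - p.meet q) := by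
        rw [dist_comm _ q.eval]
        exact add_le_add (p.dist_eval_ray_le ((isTreeMeet T).le_left p q))
          (q.dist_eval_ray_le ((isTreeMeet T).le_right p q))
    _ = 1 * dist p q := by rw [one_mul, dist_def]; ring

lemma exists_dist_eq : ∀ p q : T.Point, ∀ t ∈ Icc (0 : ℝ) 1,
    ∃ z, dist p z = t * dist p q ∧ dist z q = (1 - t) * dist p q :=
  (isTreeMeet T).exists_dist_eq fun p t ht₀ ht => ⟨⟨p.chain, t, ht₀, ht.trans p.height_le⟩, rfl,
    fun q => by
      simp only [Point.meet]
      rw [min_assoc, min_assoc, ← min_assoc t p.height, min_eq_left ht]⟩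

lemma exists_dist_le (p : T.Point) {n : ℕ} (hn : 1 ≤ n) :
    ∃ q : T.Point, q.chain.level ≤ n ∧ dist p q ≤ 4 * (1 / 2) ^ n := by
  set H := T.height p.chain.pt (min n p.chain.level)
  refine ⟨⟨p.chain.truncate n, min p.height H, le_min p.height_nonneg (T.height_nonneg _ _),
    (min_le_right _ _).trans (Chain.height_truncate _ _).ge⟩, min_le_left _ _, ?_⟩
  rw [dist_def, meet]
  simp only [Chain.meet_truncate]
  rw [min_eq_right (min_le_left _ _), min_eq_left (min_le_right _ _)]
  have := p.chain.height_sub_height_le hn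
  rcases min_cases p.height H with ⟨h, -⟩ | ⟨h, hH⟩ <;> rw [h]
  · linarith [(by positivity : (0 : ℝ) ≤ 4 * (1 / 2) ^ n)]
  · linarith [p.height_le]

end Point

variable (T)

lemma totallyBounded_setOf_level_le (n : ℕ) : TotallyBounded {p : T.Point | p.chain.level ≤ n} := by
  have hseg : ∀ v : T.Chain,
      IsCompact (range fun h : Icc 0 v.height => (⟨v, h, h.2.1, h.2.2⟩ : T.Point)) := fun v =>
    isCompact_range (Isometry.of_dist_eq fun a b => by
      rw [Subtype.dist_eq, Real.dist_eq]; exact Point.dist_eq_abs_of_chain_eq rfl).continuous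
  refine ((T.finite_setOf_level_le n).isCompact_biUnion fun v _ => hseg v).totallyBounded.subset ?_
  rintro ⟨v, h, h₀, hle⟩ hv
  exact mem_biUnion hv ⟨⟨h, h₀, hle⟩, rfl⟩

lemma totallyBounded_univ : TotallyBounded (univ : Set T.Point) := by
  refine Metric.totallyBounded_univ_of_approx fun ε hε => ?_
  obtain ⟨n, hn⟩ :=
    exists_pow_lt_of_lt_one (by positivity : 0 < ε / 4) (by norm_num : (1 / 2 : ℝ) < 1)
  refine ⟨_, T.totallyBounded_setOf_level_le (n + 1), fun p => ?_⟩
  obtain ⟨q, hq, hpq⟩ := p.exists_dist_le (Nat.le_add_left 1 n)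
  exact ⟨q, hq, hpq.trans_lt (by rw [pow_succ]; linarith)⟩

theorem exists_compact_rTree [CompleteSpace X] :
    ∃ (Y : Type u) (_ : MetricSpace Y) (_ : CompactSpace Y), IsRTree Y ∧
      ∃ γ : Y → X, LipschitzWith 1 γ ∧ ∀ k, T.net k ⊆ range γ := by
  have := Completion.compactSpace_of_totallyBounded T.totallyBounded_univ
  have hd := Completion.denseRange_coe (α := T.Point)
  have hi := Completion.coe_isometry (α := T.Point)
  refine ⟨Completion T.Point, inferInstance, this,
    ((isTreeMeet T).fourPointCondition.of_denseRange hi hd).isRTree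
      (MetricallyConvex.of_denseRange Point.exists_dist_eq hi hd),
    Completion.extension Point.eval, Point.lipschitzWith_eval.completion_extension,
    fun k y hy => ?_⟩
  obtain ⟨v, hv, rfl⟩ := T.exists_chain hy
  refine ⟨(⟨v, v.height, v.height_nonneg, le_rfl⟩ : T.Point), ?_⟩
  rw [Completion.extension_coe Point.lipschitzWith_eval.uniformContinuous]
  exact (T.ray_height v.pt v.level).trans (by rw [hv])

end PathNets

lemma LipschitzConnected.exists_pathNets {X : Type u} [MetricSpace X] (h : LipschitzConnected X)
    (htb : ∀ ε : ℝ, 0 < ε → ∃ F : Set X, F.Finite ∧ ∀ x : X, ∃ y ∈ F, intrinsicDist x y < ε)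
    (x₀ : X) : ∃ T : PathNets X, ∀ x : X, ∀ ε > 0, ∃ k, ∃ y ∈ T.net k, dist x y < ε := by
  choose net hfin hnet using fun k : ℕ => htb ((1 / 2) ^ (k + 1)) (by positivity)
  choose len hlen₀ hlen path hpath hpath₀ hpathlen using h.exists_path_s13
  refine ⟨⟨x₀, net, hfin, len, path, hlen₀, hpath, hpath₀, hpathlen, fun k y hy => ?_⟩,
    fun x ε hε => ?_⟩
  · obtain ⟨x, hx, hyx⟩ := hnet k y
    refine ⟨x, hx, ?_⟩
    calc len x y ≤ 2 * intrinsicDist y x := intrinsicDist_comm x y ▸ hlen x y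
      _ < 2 * (1 / 2) ^ (k + 1) := by gcongr
      _ = (1 / 2) ^ k := by ring
  · obtain ⟨k, hk⟩ := exists_pow_lt_of_lt_one hε (by norm_num : (1 / 2 : ℝ) < 1)
    obtain ⟨y, hy, hxy⟩ := hnet k x
    refine ⟨k, y, hy, (h.dist_le_intrinsicDist x y).trans_lt (hxy.trans ?_)⟩
    calc (1 / 2 : ℝ) ^ (k + 1) ≤ (1 / 2) ^ k :=
          pow_le_pow_of_le_one (by norm_num) (by norm_num) k.le_succ
      _ < ε := hk

/-- A compact Lipschitz connected metric space whose intrinsic metric is totally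
bounded is a 1-Lipschitz image of a compact ℝ-tree. -/
theorem compact_image_of_compact_rtree (X : Type) [MetricSpace X] [CompactSpace X]
    (h : LipschitzConnected X)
    (htb : ∀ ε : ℝ, 0 < ε → ∃ F : Set X, F.Finite ∧ ∀ x : X, ∃ y ∈ F, intrinsicDist x y < ε) :
    ∃ (Y : Type) (_ : MetricSpace Y) (_ : CompactSpace Y), IsRTree Y ∧
      ∃ γ : Y → X, Function.Surjective γ ∧ LipschitzWith 1 γ := by
  rcases isEmpty_or_nonempty X with hX | ⟨⟨x₀⟩⟩
  · exact ⟨X, inferInstance, inferInstance, ⟨isEmptyElim, isEmptyElim⟩, id,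
      Function.surjective_id, LipschitzWith.id⟩
  obtain ⟨T, hT⟩ := h.exists_pathNets htb x₀
  obtain ⟨Y, _, _, hY, γ, hγ, hnet⟩ := T.exists_compact_rTree
  refine ⟨Y, inferInstance, inferInstance, hY, γ, fun x => ?_, hγ⟩
  have hx : x ∈ closure (range γ) := Metric.mem_closure_iff.2 fun ε hε => by
    obtain ⟨k, y, hy, hxy⟩ := hT x ε hε
    exact ⟨y, hnet k hy, hxy⟩
  rwa [(isCompact_range hγ.continuous).isClosed.closure_eq] at hx
end

section
/- Let L ≥ 1 and let Y be a compact metric space that is L-Lipschitz connected (for all x,y ∈ Y there is an L-Lipschitz map f : [0, d_Y(x,y)] → Y with f(0) = x and f(d_Y(x,y)) = y). If there exists a surjective Lipschitz map f : Y → X onto a metric space X, then X is compact, Lipschitz connected, and the intrinsic metric d_IX of X is totally bounded, i.e. for every ε > 0 there is a finite set F ⊆ X such that every x ∈ X satisfies d_IX(x,y) < ε for some y ∈ F. -/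
/-!
A path of `Y` from `a` to `b` that is `L`-Lipschitz on `[0, d(a,b)]`, reparametrized over `[0,1]`
and pushed forward by a `K`-Lipschitz surjection `f`, is a `K L d(a,b)`-Lipschitz path from
`f a` to `f b`. Hence `X` is Lipschitz connected and `d_IX(f a, f b) ≤ K L d(a,b)`, so the image
under `f` of a finite `δ`-net of the compact space `Y` is a finite `K L δ`-net of `X` for `d_IX`.
-/

open Set

def scaleUnitIcc (r : ℝ) (hr : 0 ≤ r) : Icc (0:ℝ) 1 → Icc 0 r :=
  fun t => ⟨r * t, mul_nonneg hr t.2.1, mul_le_of_le_one_right hr t.2.2⟩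

lemma lipschitzWith_scaleUnitIcc (r : ℝ) (hr : 0 ≤ r) :
    LipschitzWith r.toNNReal (scaleUnitIcc r hr) := by
  refine LipschitzWith.subtype_mk ?_ _
  have hnorm : ‖r‖₊ * 1 = r.toNNReal := by ext; simp [abs_of_nonneg hr, hr]
  exact hnorm ▸ (lipschitzWith_smul r).comp (LipschitzWith.subtype_val _)

section

variable {L K : NNReal} {Y X : Type*} [MetricSpace Y] [MetricSpace X]

lemma LLipschitzConnected.exists_unitIcc_path (hY : LLipschitzConnected L Y) (a b : Y) :
    ∃ p : Icc (0:ℝ) 1 → Y, LipschitzWith (L * (dist a b).toNNReal) p ∧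
      p ⟨0, by norm_num⟩ = a ∧ p ⟨1, by norm_num⟩ = b := by
  obtain ⟨g, hg, hg0, hg1⟩ := hY a b
  refine ⟨g ∘ scaleUnitIcc (dist a b) dist_nonneg,
    hg.comp (lipschitzWith_scaleUnitIcc _ _), ?_, ?_⟩
  · simpa [scaleUnitIcc] using hg0
  · simpa [scaleUnitIcc] using hg1

lemma intrinsicDist_le_of_lipschitzWith {x y : X} {p : Icc (0:ℝ) 1 → X}
    (hp : LipschitzWith K p) (h0 : p ⟨0, by norm_num⟩ = x) (h1 : p ⟨1, by norm_num⟩ = y) :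
    intrinsicDist x y ≤ K :=
  csInf_le ⟨0, fun _ hk => hk.1⟩ ⟨K.2, p, by rwa [Real.toNNReal_coe], h0, h1⟩

lemma LLipschitzConnected.intrinsicDist_map_le (hY : LLipschitzConnected L Y) {f : Y → X}
    (hf : LipschitzWith K f) (a b : Y) :
    intrinsicDist (f a) (f b) ≤ K * L * dist a b := by
  obtain ⟨p, hp, hp0, hp1⟩ := hY.exists_unitIcc_path a b
  have hfp := intrinsicDist_le_of_lipschitzWith (hf.comp hp)
    (congrArg f hp0) (congrArg f hp1)
  simpa [mul_assoc, dist_nonneg] using hfp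

lemma LLipschitzConnected.lipschitzConnected_of_surjective (hY : LLipschitzConnected L Y)
    {f : Y → X} (hf : LipschitzWith K f) (hsurj : Function.Surjective f) :
    LipschitzConnected X := by
  intro x y
  obtain ⟨a, rfl⟩ := hsurj x
  obtain ⟨b, rfl⟩ := hsurj y
  obtain ⟨p, hp, hp0, hp1⟩ := hY.exists_unitIcc_path a b
  exact ⟨f ∘ p, ⟨_, hf.comp hp⟩, congrArg f hp0, congrArg f hp1⟩

lemma LLipschitzConnected.exists_finite_intrinsicDist_lt (hY : LLipschitzConnected L Y)
    (hYtb : TotallyBounded (univ : Set Y)) {f : Y → X} (hf : LipschitzWith K f)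
    (hsurj : Function.Surjective f) {ε : ℝ} (hε : 0 < ε) :
    ∃ F : Set X, F.Finite ∧ ∀ x : X, ∃ y ∈ F, intrinsicDist x y < ε := by
  obtain ⟨δ, hδ, hKLδ⟩ := exists_pos_mul_lt hε ((K : ℝ) * L)
  obtain ⟨t, ht, hcover⟩ := Metric.totallyBounded_iff.mp hYtb δ hδ
  refine ⟨f '' t, ht.image f, fun x => ?_⟩
  obtain ⟨a, rfl⟩ := hsurj x
  obtain ⟨b, hb, hab⟩ := mem_iUnion₂.mp (hcover (mem_univ a))
  refine ⟨f b, mem_image_of_mem f hb, ?_⟩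
  calc intrinsicDist (f a) (f b) ≤ K * L * dist a b := hY.intrinsicDist_map_le hf a b
    _ ≤ K * L * δ := by gcongr; exact (Metric.mem_ball.mp hab).le
    _ < ε := hKLδ

end

theorem image_of_compact_L_lipschitz_connected_general (L : NNReal)
    (Y : Type) [MetricSpace Y] [CompactSpace Y] (hY : LLipschitzConnected L Y)
    (X : Type) [MetricSpace X] (f : Y → X)
    (hsurj : Function.Surjective f) (hlip : ∃ K : NNReal, LipschitzWith K f) :
    CompactSpace X ∧ LipschitzConnected X ∧
      ∀ ε : ℝ, 0 < ε → ∃ F : Set X, F.Finite ∧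
        ∀ x : X, ∃ y ∈ F, intrinsicDist x y < ε := by
  obtain ⟨K, hK⟩ := hlip
  exact ⟨hsurj.compactSpace hK.continuous, hY.lipschitzConnected_of_surjective hK hsurj,
    fun _ hε => hY.exists_finite_intrinsicDist_lt isCompact_univ.totallyBounded hK hsurj hε⟩

/-- A Lipschitz image of an `L`-Lipschitz connected compact metric space is compact,
Lipschitz connected, and has totally bounded intrinsic metric. -/
theorem image_of_compact_L_lipschitz_connected (L : NNReal) (hL : 1 ≤ L)
    (Y : Type) [MetricSpace Y] [CompactSpace Y] (hY : LLipschitzConnected L Y)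
    (X : Type) [MetricSpace X] (f : Y → X)
    (hsurj : Function.Surjective f) (hlip : ∃ K : NNReal, LipschitzWith K f) :
    CompactSpace X ∧ LipschitzConnected X ∧
      ∀ ε : ℝ, 0 < ε → ∃ F : Set X, F.Finite ∧
        ∀ x : X, ∃ y ∈ F, intrinsicDist x y < ε :=
  image_of_compact_L_lipschitz_connected_general L Y hY X f hsurj hlip
end
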